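/- arXiv:1904.11667 — 10 statements merged into one kernel-verified Lean document; each statement's English description precedes it below -/
import Mathlib

section
/- Let s, r ≥ 0 and d ≥ 1 be integers with s + r + d ≥ 2. There exists an element X of E(s,r,d) that is left invariant by some nontrivial affine map T(w) = a·w + b if and only if there exists an integer k ≥ 2 dividing both d and s − r − 1 such that k divides s or k divides r. Equivalently, every element of E(s,r,d) has trivial isotropy group if and only if gcd(d, s − r − 1) = 1, or k ∤ s and k ∤ r for every integer k ≥ 2 dividing both d and s − r − 1. -/
open Polynomial

noncomputable section

/-- The data `(λ, Q, P, E)` of an element `X ∈ E(s,r,d)`: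
`λ ≠ 0`, `Q`, `P` monic of degrees `s`, `r` with no common roots,
and `deg E = d`. -/
def EData (s r d : ℕ) (lam : ℂ) (Q P E : Polynomial ℂ) : Prop :=
  lam ≠ 0 ∧ Q.Monic ∧ P.Monic ∧ Q.natDegree = s ∧ P.natDegree = r ∧
    E.natDegree = d ∧ ∀ z : ℂ, ¬ (Q.IsRoot z ∧ P.IsRoot z)

/-- The affine map `T(w) = a·w + b` leaves the vector field with data `(λ,Q,P,E)`
invariant: `Q(aw+b)·P(w)·exp(E(aw+b)) = a·Q(w)·P(aw+b)·exp(E(w))` for all `w`. -/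
def LeavesInv (Q P E : Polynomial ℂ) (a b : ℂ) : Prop :=
  ∀ w : ℂ,
    Q.eval (a * w + b) * P.eval w * Complex.exp (E.eval (a * w + b)) =
      a * Q.eval w * P.eval (a * w + b) * Complex.exp (E.eval w)

/-!
If `T(w) = a w + b` preserves `X`, then `Q(T) P exp(E∘T - E) = a Q P(T)`. Differentiating, the
Wronskian of the two polynomial factors would have too large a degree unless `E∘T - E` is a
constant `c`; coprimality of `Q` and `P` then gives `Q∘T = a^s Q` and `P∘T = a^r P`.
For a translation (`a = 1`, `b ≠ 0`) this forces `Q`, `P` constant and `deg E ≤ 1`, which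
`s + r + d ≥ 2` excludes. Otherwise `T` has a fixed point, where `c = 0`; hence `a^d = 1`,
`a^s = a^(r+1)`, and `a^s = 1` or `a^r = 1` since `Q` and `P` do not both vanish there. The order
of `a` is the required `k`. Conversely, rotation by a primitive `k`-th root of unity preserves
`(z^k - 1)^(s/k) z^(-r) exp(z^d)` when `k ∣ s`, and `z^s (z^k - 1)^(-r/k) exp(z^d)`
when `k ∣ r`.
-/

namespace Polynomial

section Field

variable {K : Type*} [Field K]

lemma comp_C_mul_X_add_C_ne_zero {p : K[X]} {a : K} (b : K) (hp : p ≠ 0) (ha : a ≠ 0) :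
    p.comp (C a * X + C b) ≠ 0 := by
  rw [← leadingCoeff_ne_zero, leadingCoeff_comp (by rw [natDegree_linear ha]; exact one_ne_zero),
    leadingCoeff_linear ha]
  exact mul_ne_zero (leadingCoeff_ne_zero.mpr hp) (pow_ne_zero _ ha)

lemma natDegree_comp_C_mul_X_add_C (p : K[X]) {a : K} (b : K) (ha : a ≠ 0) :
    (p.comp (C a * X + C b)).natDegree = p.natDegree := by
  rw [natDegree_comp, natDegree_linear ha, mul_one]

lemma leadingCoeff_comp_C_mul_X_add_C (p : K[X]) {a : K} (b : K) (ha : a ≠ 0) :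
    (p.comp (C a * X + C b)).leadingCoeff = p.leadingCoeff * a ^ p.natDegree := by
  rw [leadingCoeff_comp (by rw [natDegree_linear ha]; exact one_ne_zero), leadingCoeff_linear ha]

lemma comp_C_mul_X_add_C_eq_C_pow_mul {p : K[X]} {a : K} (b : K) (hp : p.Monic) (ha : a ≠ 0)
    (hdvd : p ∣ p.comp (C a * X + C b)) :
    p.comp (C a * X + C b) = C (a ^ p.natDegree) * p := by
  conv_lhs => rw [eq_leadingCoeff_mul_of_monic_of_dvd_of_natDegree_le hp hdvd
    (natDegree_comp_C_mul_X_add_C p b ha).le]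
  rw [leadingCoeff_comp_C_mul_X_add_C p b ha, hp.leadingCoeff, one_mul]

lemma pow_natDegree_eq_one_of_comp_eq_add_C {p : K[X]} {a b c : K} (hp : p.natDegree ≠ 0)
    (ha : a ≠ 0) (h : p.comp (C a * X + C b) = p + C c) : a ^ p.natDegree = 1 := by
  have hlc := congrArg leadingCoeff h
  rw [leadingCoeff_comp_C_mul_X_add_C p b ha, leadingCoeff_add_of_degree_lt' <|
    degree_C_le.trans_lt (natDegree_pos_iff_degree_pos.mp (Nat.pos_of_ne_zero hp))] at hlc
  exact (mul_eq_left₀ (leadingCoeff_ne_zero.mpr (ne_zero_of_natDegree_gt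
    (Nat.pos_of_ne_zero hp)))).mp hlc

lemma _root_.IsCoprime.dvd_and_dvd_of_C_mul_eq {Q P Q' P' : K[X]} {e a : K}
    (hcop : IsCoprime Q P) (he : e ≠ 0) (ha : a ≠ 0) (h : C e * (Q' * P) = C a * Q * P') :
    Q ∣ Q' ∧ P ∣ P' := by
  constructor
  · have hQ : Q ∣ C e * Q' * P := by rw [mul_assoc, h]; exact (dvd_mul_left Q _).mul_right _
    exact (isUnit_C.mpr he.isUnit).dvd_mul_left.mp (hcop.dvd_of_dvd_mul_right hQ)
  · have hP : P ∣ C a * P' * Q := by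
      rw [mul_right_comm, ← h]; exact dvd_mul_left P _ |>.mul_left _
    exact (isUnit_C.mpr ha.isUnit).dvd_mul_left.mp (hcop.symm.dvd_of_dvd_mul_right hP)

lemma X_pow_comp_C_mul_X (m : ℕ) (ζ : K) :
    (X ^ m : K[X]).comp (C ζ * X) = C (ζ ^ m) * X ^ m := by
  rw [X_pow_comp, mul_pow, C_pow]

lemma X_pow_sub_C_one_pow_comp_C_mul_X {k : ℕ} {ζ : K} (hζ : ζ ^ k = 1) (j : ℕ) :
    ((X ^ k - C 1) ^ j : K[X]).comp (C ζ * X) = (X ^ k - C 1) ^ j := by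
  rw [pow_comp, sub_comp, X_pow_comp_C_mul_X, hζ, C_comp, C_1, one_mul]

lemma eval_eq_zero_of_comp_eq_C_mul {p : K[X]} {a b μ z : K} (hμ : μ ≠ 1)
    (h : p.comp (C a * X + C b) = C μ * p) (hz : a * z + b = z) : p.eval z = 0 := by
  have hev := congrArg (eval z) h
  simp only [eval_comp, eval_add, eval_mul, eval_C, eval_X, hz] at hev
  by_contra hp
  exact hμ ((mul_eq_right₀ hp).mp hev.symm)

variable [CharZero K]

lemma eq_C_of_comp_X_add_C_eq {p : K[X]} {b : K} (hb : b ≠ 0) (h : p.comp (X + C b) = p) :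
    p = C (p.eval 0) := by
  have hmul : ∀ n : ℕ, p.eval (n * b) = p.eval 0 := by
    intro n
    induction n with
    | zero => simp
    | succ n ih =>
      rw [← ih, Nat.cast_succ, add_one_mul]
      simpa using congrArg (eval ((n : K) * b)) h
  refine eq_of_infinite_eval_eq _ _ (Set.infinite_of_injective_forall_mem
    (f := fun n : ℕ => (n : K) * b) (fun m n hmn => ?_) fun n => by simp [hmul n])
  exact_mod_cast mul_right_cancel₀ hb hmn

lemma natDegree_le_one_of_comp_X_add_C_eq_add_C {p : K[X]} {b c : K} (hb : b ≠ 0)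
    (h : p.comp (X + C b) = p + C c) : p.natDegree ≤ 1 := by
  set q := p - C (c / b) * X
  have hq : q.comp (X + C b) = q := by
    rw [sub_comp, h, mul_comp, C_comp, X_comp, mul_add, ← C_mul, div_mul_cancel₀ c hb]
    ring
  have hp : p = C (c / b) * X + C (q.eval 0) := by
    rw [← eq_C_of_comp_X_add_C_eq hb hq]; ring
  rw [hp]
  exact natDegree_linear_le

end Field

lemma eq_C_coeff_zero_of_eval_mul_cexp_eq {A B F : ℂ[X]} (hA : A ≠ 0)
    (h : ∀ w, A.eval w * Complex.exp (F.eval w) = B.eval w) : F = C (F.coeff 0) := by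
  refine eq_C_of_derivative_eq_zero ?_
  have hB : B ≠ 0 := by
    rintro rfl
    exact hA (Polynomial.funext fun w => by
      simpa [Complex.exp_ne_zero] using h w)
  have hderiv : ∀ w, (derivative A).eval w * Complex.exp (F.eval w) +
      A.eval w * (Complex.exp (F.eval w) * (derivative F).eval w) = (derivative B).eval w := by
    intro w
    have hAF : HasDerivAt (fun x => A.eval x * Complex.exp (F.eval x)) _ w :=
      (Polynomial.hasDerivAt A w).mul (Polynomial.hasDerivAt F w).cexp
    simp only [h] at hAF
    exact hAF.unique (Polynomial.hasDerivAt B w)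
  -- `B = A exp F` turns the Wronskian `A B' - A' B` into `A F' B`, of too large a degree.
  have hW : wronskian A B = A * derivative F * B := by
    refine Polynomial.funext fun w => ?_
    simp only [wronskian, eval_sub, eval_mul]
    linear_combination (-A.eval w) * hderiv w +
      ((derivative A).eval w + A.eval w * (derivative F).eval w) * h w
  by_contra hF
  have hW0 : wronskian A B ≠ 0 := hW ▸ mul_ne_zero (mul_ne_zero hA hF) hB
  have hlt := natDegree_wronskian_lt_add hW0
  rw [hW, natDegree_mul (mul_ne_zero hA hF) hB, natDegree_mul hA hF] at hlt
  omega

end Polynomial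

section Isotropy

variable {s r d : ℕ} {lam : ℂ} {Q P E : ℂ[X]} {a b : ℂ}

lemma LeavesInv.exists_comp_eq (h : LeavesInv Q P E a b) (ha : a ≠ 0) (hQ : Q ≠ 0)
    (hP : P ≠ 0) :
    ∃ c : ℂ, E.comp (C a * X + C b) = E + C c ∧
      C (Complex.exp c) * (Q.comp (C a * X + C b) * P) = C a * Q * P.comp (C a * X + C b) := by
  have hexp : ∀ w, (Q.comp (C a * X + C b) * P).eval w *
      Complex.exp ((E.comp (C a * X + C b) - E).eval w) =
        (C a * Q * P.comp (C a * X + C b)).eval w := by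
    intro w
    simp only [eval_mul, eval_sub, eval_comp, eval_add, eval_C, eval_X, Complex.exp_sub]
    rw [mul_div_assoc', div_eq_iff (Complex.exp_ne_zero _), h w]
  have hF := eq_C_coeff_zero_of_eval_mul_cexp_eq
    (mul_ne_zero (comp_C_mul_X_add_C_ne_zero b hQ ha) hP) hexp
  refine ⟨_, by linear_combination hF, Polynomial.funext fun w => ?_⟩
  rw [← hexp w, hF, eval_C, eval_mul, eval_C, coeff_C_zero]
  ring

lemma EData.comp_eq_of_leavesInv (hdat : EData s r d lam Q P E) (ha : a ≠ 0)
    (h : LeavesInv Q P E a b) :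
    ∃ c : ℂ, E.comp (C a * X + C b) = E + C c ∧ Q.comp (C a * X + C b) = C (a ^ s) * Q ∧
      P.comp (C a * X + C b) = C (a ^ r) * P ∧ Complex.exp c * a ^ s = a ^ (r + 1) := by
  obtain ⟨-, hQm, hPm, rfl, rfl, -, hroot⟩ := hdat
  obtain ⟨c, hE, hQP⟩ := h.exists_comp_eq ha hQm.ne_zero hPm.ne_zero
  have hcop : IsCoprime Q P :=
    (isCoprime_iff_aeval_ne_zero_of_isAlgClosed ℂ ℂ Q P).mpr fun z => by
      rw [← not_and_or]
      simpa using hroot z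
  obtain ⟨hQdvd, hPdvd⟩ := hcop.dvd_and_dvd_of_C_mul_eq (Complex.exp_ne_zero c) ha hQP
  have hQ := comp_C_mul_X_add_C_eq_C_pow_mul b hQm ha hQdvd
  have hP := comp_C_mul_X_add_C_eq_C_pow_mul b hPm ha hPdvd
  refine ⟨c, hE, hQ, hP,
    C_injective (mul_right_cancel₀ (mul_ne_zero hQm.ne_zero hPm.ne_zero) ?_)⟩
  rw [hQ, hP] at hQP
  rw [C_mul, pow_succ, C_mul]
  linear_combination hQP

lemma EData.eq_zero_of_leavesInv_one (hdat : EData s r d lam Q P E) (h2 : 2 ≤ s + r + d)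
    (h : LeavesInv Q P E 1 b) : b = 0 := by
  by_contra hb
  obtain ⟨c, hE, hQ, hP, -⟩ := hdat.comp_eq_of_leavesInv one_ne_zero h
  simp only [C_1, one_mul, one_pow] at hE hQ hP
  obtain ⟨-, -, -, rfl, rfl, rfl, -⟩ := hdat
  rw [eq_C_of_comp_X_add_C_eq hb hQ, eq_C_of_comp_X_add_C_eq hb hP, natDegree_C, natDegree_C]
    at h2
  have := natDegree_le_one_of_comp_X_add_C_eq_add_C hb hE
  omega

lemma EData.pow_eq_of_leavesInv (hdat : EData s r d lam Q P E) (hd : d ≠ 0) (ha : a ≠ 0)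
    (ha1 : a ≠ 1) (h : LeavesInv Q P E a b) :
    a ^ d = 1 ∧ a ^ (r + 1) = a ^ s ∧ (a ^ s = 1 ∨ a ^ r = 1) := by
  obtain ⟨c, hE, hQ, hP, hlead⟩ := hdat.comp_eq_of_leavesInv ha h
  obtain ⟨-, -, -, -, -, rfl, hroot⟩ := hdat
  have hfix : a * (b / (1 - a)) + b = b / (1 - a) := by
    field_simp [sub_ne_zero.mpr (Ne.symm ha1)]
    ring
  have hc : c = 0 := by simpa [eval_comp, hfix] using congrArg (eval (b / (1 - a))) hE
  refine ⟨pow_natDegree_eq_one_of_comp_eq_add_C hd ha hE, by simpa [hc] using hlead.symm, ?_⟩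
  by_contra! hne
  exact hroot _ ⟨eval_eq_zero_of_comp_eq_C_mul hne.1 hQ hfix,
    eval_eq_zero_of_comp_eq_C_mul hne.2 hP hfix⟩

end Isotropy

lemma IsOfFinOrder.pow_eq_pow_iff_intCast_dvd {M : Type*} [Monoid M] {x : M}
    (hx : IsOfFinOrder x) {m n : ℕ} : x ^ n = x ^ m ↔ (orderOf x : ℤ) ∣ (m : ℤ) - n :=
  hx.pow_eq_pow_iff_modEq.trans Nat.modEq_iff_dvd

lemma exists_divisor_of_pow_eq {M : Type*} [Monoid M] {x : M} {s r d : ℕ} (hd : d ≠ 0)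
    (hx1 : x ≠ 1) (hxd : x ^ d = 1) (hsr : x ^ (r + 1) = x ^ s) (hor : x ^ s = 1 ∨ x ^ r = 1) :
    ∃ k : ℕ, 2 ≤ k ∧ (k : ℤ) ∣ d ∧ (k : ℤ) ∣ (s : ℤ) - r - 1 ∧ (k ∣ s ∨ k ∣ r) := by
  have hx : IsOfFinOrder x := isOfFinOrder_iff_pow_eq_one.mpr ⟨d, Nat.pos_of_ne_zero hd, hxd⟩
  refine ⟨orderOf x, ?_, Int.natCast_dvd_natCast.mpr (orderOf_dvd_of_pow_eq_one hxd), ?_,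
    hor.imp orderOf_dvd_of_pow_eq_one orderOf_dvd_of_pow_eq_one⟩
  · have := hx.orderOf_pos
    have := mt orderOf_eq_one_iff.mp hx1
    omega
  · have := hx.pow_eq_pow_iff_intCast_dvd.mp hsr
    push_cast at this
    rwa [sub_sub]

lemma leavesInv_of_comp_C_mul_X {Q P E : ℂ[X]} {ζ α β : ℂ} (hQ : Q.comp (C ζ * X) = C α * Q)
    (hP : P.comp (C ζ * X) = C β * P) (hE : E.comp (C ζ * X) = E) (hαβ : α = ζ * β) :
    LeavesInv Q P E ζ 0 := by
  intro w
  have hQw := congrArg (eval w) hQ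
  have hPw := congrArg (eval w) hP
  have hEw := congrArg (eval w) hE
  simp only [eval_comp, eval_mul, eval_C, eval_X] at hQw hPw hEw
  rw [add_zero, hQw, hPw, hEw, hαβ]
  ring

lemma not_isRoot_X_pow_and_isRoot_X_pow_sub_C_one_pow {k : ℕ} (hk : k ≠ 0) (m j : ℕ) (z : ℂ) :
    ¬ ((X ^ m : ℂ[X]).IsRoot z ∧ ((X ^ k - C 1) ^ j : ℂ[X]).IsRoot z) := by
  rintro ⟨hX, hG⟩
  have hz : z = 0 := eq_zero_of_pow_eq_zero (by simpa using hX)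
  simp [hz, zero_pow hk] at hG

lemma exists_leavesInv_of_divisor {s r d k : ℕ} (hk : 2 ≤ k) (hkd : (k : ℤ) ∣ d)
    (hksr : (k : ℤ) ∣ (s : ℤ) - r - 1) (hor : k ∣ s ∨ k ∣ r) :
    ∃ (lam : ℂ) (Q P E : ℂ[X]), EData s r d lam Q P E ∧
      ∃ a b : ℂ, a ≠ 0 ∧ (a, b) ≠ (1, 0) ∧ LeavesInv Q P E a b := by
  have hk0 : k ≠ 0 := by omega
  have hζ := Complex.isPrimitiveRoot_exp k hk0
  set ζ := Complex.exp (2 * Real.pi * Complex.I / k)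
  have hnontriv : (ζ, (0 : ℂ)) ≠ (1, 0) := by simp [hζ.ne_one (by omega)]
  have hE : (X ^ d : ℂ[X]).comp (C ζ * X) = X ^ d := by
    rw [X_pow_comp_C_mul_X, (hζ.pow_eq_one_iff_dvd d).mpr (Int.natCast_dvd_natCast.mp hkd), C_1,
      one_mul]
  have hG (j : ℕ) : ((X ^ k - C 1) ^ j : ℂ[X]).comp (C ζ * X) = C 1 * (X ^ k - C 1) ^ j := by
    rw [X_pow_sub_C_one_pow_comp_C_mul_X hζ.pow_eq_one, C_1, one_mul]
  have hGm (j : ℕ) : ((X ^ k - C 1) ^ j : ℂ[X]).Monic := (monic_X_pow_sub_C 1 hk0).pow j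
  have hGd {n : ℕ} (hn : k ∣ n) : ((X ^ k - C 1) ^ (n / k) : ℂ[X]).natDegree = n := by
    rw [natDegree_pow, natDegree_X_pow_sub_C, Nat.div_mul_cancel hn]
  rcases hor with hks | hkr
  · have hr : ζ * ζ ^ r = 1 := by
      rw [← pow_succ', hζ.pow_eq_one_iff_dvd, ← Int.natCast_dvd_natCast]
      push_cast
      have h := (Int.natCast_dvd_natCast.mpr hks).sub hksr
      rwa [show (s : ℤ) - (s - r - 1) = r + 1 by ring] at h
    refine ⟨1, _, X ^ r, X ^ d, ⟨one_ne_zero, hGm (s / k), monic_X_pow r, hGd hks,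
      natDegree_X_pow r, natDegree_X_pow d, fun z hz =>
        not_isRoot_X_pow_and_isRoot_X_pow_sub_C_one_pow hk0 r _ z hz.symm⟩,
      ζ, 0, hζ.ne_zero hk0, hnontriv,
      leavesInv_of_comp_C_mul_X (hG _) (X_pow_comp_C_mul_X r ζ) hE hr.symm⟩
  · have hs : ζ ^ s = ζ * 1 := by
      conv_rhs => rw [mul_one, ← pow_one ζ]
      rw [(hζ.isOfFinOrder hk0).pow_eq_pow_iff_intCast_dvd, ← hζ.eq_orderOf,
        show ((1 : ℕ) : ℤ) - s = -((s - r - 1) + r) by push_cast; ring]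
      exact (hksr.add (Int.natCast_dvd_natCast.mpr hkr)).neg_right
    refine ⟨1, X ^ s, _, X ^ d, ⟨one_ne_zero, monic_X_pow s, hGm (r / k), natDegree_X_pow s,
      hGd hkr, natDegree_X_pow d, not_isRoot_X_pow_and_isRoot_X_pow_sub_C_one_pow hk0 s _⟩,
      ζ, 0, hζ.ne_zero hk0, hnontriv,
      leavesInv_of_comp_C_mul_X (X_pow_comp_C_mul_X s ζ) (hG _) hE hs⟩

lemma not_exists_dvd_iff {m n : ℤ} {p : ℕ → Prop} :
    (¬ ∃ k : ℕ, 2 ≤ k ∧ (k : ℤ) ∣ m ∧ (k : ℤ) ∣ n ∧ p k) ↔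
      (Int.gcd m n = 1 ∨ ∀ k : ℕ, 2 ≤ k → (k : ℤ) ∣ m → (k : ℤ) ∣ n → ¬ p k) := by
  refine ⟨fun h => Or.inr fun k hk hkm hkn hp => h ⟨k, hk, hkm, hkn, hp⟩, ?_⟩
  rintro (hgcd | hall) ⟨k, hk, hkm, hkn, hp⟩
  · have hk1 := Int.dvd_coe_gcd hkm hkn
    rw [hgcd, Nat.cast_one, ← Nat.cast_one, Int.natCast_dvd_natCast, Nat.dvd_one] at hk1
    omega
  · exact hall k hk hkm hkn hp

theorem exists_nontrivial_leavesInv_iff {s r d : ℕ} (hd : 1 ≤ d) (h2 : 2 ≤ s + r + d) :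
    (∃ (lam : ℂ) (Q P E : ℂ[X]), EData s r d lam Q P E ∧
        ∃ a b : ℂ, a ≠ 0 ∧ (a, b) ≠ (1, 0) ∧ LeavesInv Q P E a b) ↔
      ∃ k : ℕ, 2 ≤ k ∧ (k : ℤ) ∣ d ∧ (k : ℤ) ∣ (s : ℤ) - r - 1 ∧ (k ∣ s ∨ k ∣ r) := by
  refine ⟨?_, fun ⟨k, hk, hkd, hksr, hor⟩ => exists_leavesInv_of_divisor hk hkd hksr hor⟩
  rintro ⟨lam, Q, P, E, hdat, a, b, ha, hab, h⟩
  by_cases ha1 : a = 1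
  · subst ha1
    exact absurd (by rw [hdat.eq_zero_of_leavesInv_one h2 h]) hab
  · obtain ⟨had, hsr, hor⟩ := hdat.pow_eq_of_leavesInv (by omega) ha ha1 h
    exact exists_divisor_of_pow_eq (by omega) ha1 had hsr hor

/-- existence of an element of `E(s,r,d)` with nontrivial symmetry
is equivalent to the arithmetic/divisor condition; equivalently, every element
has trivial isotropy iff `gcd(d, s−r−1) = 1` or no common divisor `k ≥ 2`
divides `s` or `r`. -/
theorem stmt0 (s r d : ℕ) (hd : 1 ≤ d) (h2 : 2 ≤ s + r + d) :
    ((∃ (lam : ℂ) (Q P E : Polynomial ℂ), EData s r d lam Q P E ∧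
        ∃ a b : ℂ, a ≠ 0 ∧ (a, b) ≠ (1, 0) ∧ LeavesInv Q P E a b) ↔
      (∃ k : ℕ, 2 ≤ k ∧ (k : ℤ) ∣ (d : ℤ) ∧ (k : ℤ) ∣ ((s : ℤ) - r - 1) ∧
        (k ∣ s ∨ k ∣ r)))
    ∧
    ((∀ (lam : ℂ) (Q P E : Polynomial ℂ), EData s r d lam Q P E →
        ∀ a b : ℂ, a ≠ 0 → LeavesInv Q P E a b → a = 1 ∧ b = 0) ↔
      (Int.gcd (d : ℤ) ((s : ℤ) - r - 1) = 1 ∨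
        ∀ k : ℕ, 2 ≤ k → (k : ℤ) ∣ (d : ℤ) → (k : ℤ) ∣ ((s : ℤ) - r - 1) →
          ¬ k ∣ s ∧ ¬ k ∣ r)) := by
  refine ⟨exists_nontrivial_leavesInv_iff hd h2, ?_⟩
  simp only [← not_or]
  rw [← not_exists_dvd_iff, ← exists_nontrivial_leavesInv_iff hd h2]
  simp only [not_exists, not_and, Ne, Prod.mk.injEq]
  grind
end
end

section
/- Let s, r ≥ 0 and d ≥ 1 be integers with s + r + d ≥ 2, and let X ∈ E(s,r,d). The set of affine maps leaving X invariant is a subgroup of the group of affine transformations of ℂ under composition; this group is finite and cyclic, its order divides both d and s − r − 1, and if it is nontrivial then all of its elements fix one common point C ∈ ℂ (they are rotations about C). -/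
open Polynomial

noncomputable section

/-!
Write `T w = a * w + b`. The invariance identity says that `exp (E ∘ T - E)` is the rational
function `a Q (P ∘ T) / ((Q ∘ T) P)`; differentiating and counting degrees (a Wronskian bound)
forces `E ∘ T = E + c` for a constant `c`, and then `e^c (Q ∘ T) P = a Q (P ∘ T)` as polynomials.
Leading coefficients give `a^d = 1` and `e^c a^s = a^(r+1)`. A nontrivial translation would make
the root set of `Q`, `P` (if `d = 1`) or `E'` (if `d ≥ 2`) invariant under `z ↦ z + b`, which is
impossible for a nonconstant polynomial; so `T ↦ a` embeds the isotropy group into the `d`-th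
roots of unity. The shift `c` is additive along powers of `T`, so finite order forces `c = 0` and
`a^(s-r-1) = 1`. Finally, a nontrivial element has a unique fixed point, and the elements
commuting with it preserve that point.
-/

namespace AffineEquiv

variable {k : Type*} [Field k]

theorem apply_eq_mul_add (T : k ≃ᵃ[k] k) (w : k) : T w = (T 1 - T 0) * w + T 0 := by
  have h (v : k) : T v = v * T.linear 1 + T 0 := by
    have hv : T.linear v = v * T.linear 1 := by
      simpa using T.linear.map_smul v 1
    simpa [hv] using T.map_vadd 0 v
  rw [h w, h 1]
  ring

theorem sub_apply_ne_zero (T : k ≃ᵃ[k] k) : T 1 - T 0 ≠ 0 :=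
  sub_ne_zero.mpr (T.injective.ne one_ne_zero)

def multiplierHom : (k ≃ᵃ[k] k) →* kˣ where
  toFun T := Units.mk0 (T 1 - T 0) T.sub_apply_ne_zero
  map_one' := by ext; simp
  map_mul' T S := by
    ext
    simp only [coe_mul, Function.comp_apply, Units.val_mk0, Units.val_mul]
    rw [T.apply_eq_mul_add (S 1), T.apply_eq_mul_add (S 0)]
    ring

@[simp]
theorem val_multiplierHom (T : k ≃ᵃ[k] k) : (multiplierHom T : k) = T 1 - T 0 := rfl

theorem eq_one_of_multiplier_eq_one {T : k ≃ᵃ[k] k} (h1 : T 1 - T 0 = 1) (h0 : T 0 = 0) :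
    T = 1 := by
  ext w
  rw [apply_eq_mul_add, h1, h0]
  simp

theorem apply_eq_self_iff {T : k ≃ᵃ[k] k} (hT : T 1 - T 0 ≠ 1) (z : k) :
    T z = z ↔ z = T 0 / (1 - (T 1 - T 0)) := by
  rw [apply_eq_mul_add, eq_div_iff (sub_ne_zero.mpr hT.symm)]
  constructor <;> intro h <;> linear_combination -h

theorem injective_domRestrict_multiplierHom {G : Subgroup (k ≃ᵃ[k] k)}
    (hG : ∀ T ∈ G, T 1 - T 0 = 1 → T 0 = 0) :
    Function.Injective (multiplierHom.domRestrict G) := by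
  refine (injective_iff_map_eq_one _).mpr fun T hT => ?_
  have h1 : T.1 1 - T.1 0 = 1 := by simpa [Units.ext_iff] using hT
  exact Subtype.ext (eq_one_of_multiplier_eq_one h1 (hG T.1 T.2 h1))

theorem exists_common_fixed_point {G : Subgroup (k ≃ᵃ[k] k)}
    (hG : ∀ T ∈ G, T 1 - T 0 = 1 → T 0 = 0) (hne : G ≠ ⊥) :
    ∃ c : k, ∀ T ∈ G, T c = c := by
  have hinj := injective_domRestrict_multiplierHom hG
  obtain ⟨⟨T, hTG⟩, hT⟩ := Subgroup.ne_bot_iff_exists_ne_one.mp hne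
  have hT1 : T 1 - T 0 ≠ 1 := fun h1 =>
    hT (Subtype.ext (eq_one_of_multiplier_eq_one h1 (hG T hTG h1)))
  refine ⟨T 0 / (1 - (T 1 - T 0)), fun S hS => ?_⟩
  have hcomm : (⟨T, hTG⟩ * ⟨S, hS⟩ : G) = ⟨S, hS⟩ * ⟨T, hTG⟩ :=
    hinj (by simp only [map_mul, mul_comm])
  have hTc : T (T 0 / (1 - (T 1 - T 0))) = T 0 / (1 - (T 1 - T 0)) :=
    (apply_eq_self_iff hT1 _).mpr rfl
  rw [← apply_eq_self_iff hT1]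
  calc T (S _) = S (T _) := congrArg (fun U : G => (U : k ≃ᵃ[k] k) _) hcomm
    _ = S _ := by rw [hTc]

def toPolynomial (T : k ≃ᵃ[k] k) : k[X] := C (T 1 - T 0) * X + C (T 0)

@[simp]
theorem eval_toPolynomial (T : k ≃ᵃ[k] k) (w : k) : T.toPolynomial.eval w = T w := by
  simp [toPolynomial, T.apply_eq_mul_add w]

theorem toPolynomial_one : (1 : k ≃ᵃ[k] k).toPolynomial = X := by
  simp [toPolynomial]

theorem toPolynomial_mul (T S : k ≃ᵃ[k] k) :
    (T * S).toPolynomial = T.toPolynomial.comp S.toPolynomial := by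
  simp only [toPolynomial, coe_mul, Function.comp_apply, add_comp, mul_comp, C_comp, X_comp,
    T.apply_eq_mul_add (S 1), T.apply_eq_mul_add (S 0)]
  simp only [C_add, C_mul, C_sub]
  ring

theorem natDegree_toPolynomial (T : k ≃ᵃ[k] k) : T.toPolynomial.natDegree = 1 :=
  natDegree_linear T.sub_apply_ne_zero

theorem leadingCoeff_comp_toPolynomial (F : k[X]) (T : k ≃ᵃ[k] k) :
    (F.comp T.toPolynomial).leadingCoeff = F.leadingCoeff * (T 1 - T 0) ^ F.natDegree := by
  rw [leadingCoeff_comp (by simp [natDegree_toPolynomial]), toPolynomial,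
    leadingCoeff_linear T.sub_apply_ne_zero]

theorem comp_toPolynomial_ne_zero {F : k[X]} (hF : F ≠ 0) (T : k ≃ᵃ[k] k) :
    F.comp T.toPolynomial ≠ 0 := by
  rw [← leadingCoeff_ne_zero, leadingCoeff_comp_toPolynomial]
  exact mul_ne_zero (leadingCoeff_ne_zero.mpr hF) (pow_ne_zero _ T.sub_apply_ne_zero)

end AffineEquiv

namespace Polynomial

theorem derivative_eq_zero_of_mul_derivative_eq_wronskian {R : Type*} [CommRing R] [IsDomain R]
    {A B g : R[X]} (hA : A ≠ 0) (hB : B ≠ 0) (h : A * derivative g * B = wronskian A B) :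
    derivative g = 0 := by
  by_contra hg
  have hlt := degree_wronskian_lt_add hA hB
  rw [← h, degree_mul, degree_mul] at hlt
  have hle : A.degree + B.degree ≤ A.degree + (derivative g).degree + B.degree := by
    simpa using
      add_le_add (add_le_add (le_refl A.degree) (zero_le_degree_iff.mpr hg)) (le_refl B.degree)
  exact lt_irrefl _ (hlt.trans_le hle)

theorem exists_eq_C_of_eval_mul_exp_eq {A B g : ℂ[X]} (hA : A ≠ 0) (hB : B ≠ 0)
    (h : ∀ w, A.eval w * Complex.exp (g.eval w) = B.eval w) :
    ∃ c : ℂ, g = C c ∧ C (Complex.exp c) * A = B := by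
  have hderiv (w : ℂ) : (derivative A).eval w * Complex.exp (g.eval w)
      + A.eval w * (Complex.exp (g.eval w) * (derivative g).eval w) = (derivative B).eval w := by
    have hfun : ((fun w => A.eval w) * fun w => Complex.exp (g.eval w)) = fun w => B.eval w :=
      _root_.funext h
    refine ((A.hasDerivAt w).mul (g.hasDerivAt w).cexp).unique ?_
    rw [hfun]
    exact B.hasDerivAt w
  have hW : A * derivative g * B = wronskian A B := by
    refine Polynomial.funext fun w => ?_
    simp only [wronskian, eval_mul, eval_sub, ← h w, ← hderiv w]
    ring
  obtain ⟨c, hc⟩ := natDegree_eq_zero.mp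
    (derivative_eq_zero.mp (derivative_eq_zero_of_mul_derivative_eq_wronskian hA hB hW))
  refine ⟨c, hc.symm, Polynomial.funext fun w => ?_⟩
  simpa [← hc, mul_comm] using h w

variable {K : Type*} [Field K]

theorem natDegree_eq_zero_of_forall_isRoot_add [CharZero K] [IsAlgClosed K] {F : K[X]} {b : K}
    (hb : b ≠ 0) (h : ∀ z, F.IsRoot z → F.IsRoot (z + b)) : F.natDegree = 0 := by
  by_contra hF
  have hF0 : F ≠ 0 := by rintro rfl; exact hF natDegree_zero
  obtain ⟨z₀, hz₀⟩ :=
    IsAlgClosed.exists_root F (by rwa [degree_eq_natDegree hF0, Nat.cast_ne_zero])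
  have hroots (n : ℕ) : F.IsRoot (z₀ + n * b) := by
    induction n with
    | zero => simpa using hz₀
    | succ n ih => simpa [add_mul, add_assoc] using h _ ih
  refine Set.infinite_of_injective_forall_mem (fun m n hmn => ?_) hroots
    (finite_setOfPred_isRoot hF0)
  simpa [hb] using hmn

theorem isRoot_add_of_forall_eval_add_mul_eq {Q P : K[X]} {b : K}
    (hcop : ∀ z, ¬(Q.IsRoot z ∧ P.IsRoot z))
    (h : ∀ z, Q.eval (z + b) * P.eval z = Q.eval z * P.eval (z + b)) {z : K} (hz : Q.IsRoot z) :
    Q.IsRoot (z + b) := by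
  have hPz : P.eval z ≠ 0 := fun hPz => hcop z ⟨hz, hPz⟩
  simpa [hz.eq_zero, hPz] using h z

end Polynomial

open AffineEquiv

section Invariance

variable {Q P E : ℂ[X]}

theorem leavesInv_iff (T : ℂ ≃ᵃ[ℂ] ℂ) :
    LeavesInv Q P E (T 1 - T 0) (T 0) ↔
      ∀ w : ℂ, Q.eval (T w) * P.eval w * Complex.exp (E.eval (T w)) =
        (T 1 - T 0) * Q.eval w * P.eval (T w) * Complex.exp (E.eval w) := by
  simp only [LeavesInv, ← T.apply_eq_mul_add]

def IsInvariantWithShift (Q P E : ℂ[X]) (T : ℂ ≃ᵃ[ℂ] ℂ) (c : ℂ) : Prop :=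
  E.comp T.toPolynomial = E + C c ∧
    C (Complex.exp c) * (Q.comp T.toPolynomial * P) = C (T 1 - T 0) * Q * P.comp T.toPolynomial

theorem leavesInv_iff_exists_isInvariantWithShift (hQ : Q ≠ 0) (hP : P ≠ 0)
    (T : ℂ ≃ᵃ[ℂ] ℂ) :
    LeavesInv Q P E (T 1 - T 0) (T 0) ↔ ∃ c, IsInvariantWithShift Q P E T c := by
  rw [leavesInv_iff]
  constructor
  · intro h
    obtain ⟨c, hc, hexp⟩ := exists_eq_C_of_eval_mul_exp_eq
      (mul_ne_zero (comp_toPolynomial_ne_zero hQ T) hP)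
      (mul_ne_zero (mul_ne_zero (C_ne_zero.mpr T.sub_apply_ne_zero) hQ)
        (comp_toPolynomial_ne_zero hP T))
      (g := E.comp T.toPolynomial - E) fun w => by
        simp only [eval_mul, eval_comp, eval_sub, eval_C, eval_toPolynomial, Complex.exp_sub]
        field_simp
        linear_combination h w
    exact ⟨c, by rw [← hc, add_sub_cancel], hexp⟩
  · rintro ⟨c, hE, hQP⟩ w
    have hEw := congrArg (eval w) hE
    have hQPw := congrArg (eval w) hQP
    simp only [eval_mul, eval_comp, eval_add, eval_C, eval_toPolynomial] at hEw hQPw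
    rw [hEw, Complex.exp_add]
    linear_combination Complex.exp (E.eval w) * hQPw

namespace IsInvariantWithShift

variable {T S : ℂ ≃ᵃ[ℂ] ℂ} {c c' : ℂ}

theorem mul (hQ : Q ≠ 0) (hP : P ≠ 0) (hT : IsInvariantWithShift Q P E T c)
    (hS : IsInvariantWithShift Q P E S c') : IsInvariantWithShift Q P E (T * S) (c + c') := by
  obtain ⟨hTE, hTQP⟩ := hT
  obtain ⟨hSE, hSQP⟩ := hS
  rw [IsInvariantWithShift, toPolynomial_mul, ← comp_assoc, hTE, add_comp, C_comp, hSE,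
    ← comp_assoc, ← comp_assoc, ← val_multiplierHom, map_mul, Units.val_mul, val_multiplierHom,
    val_multiplierHom, C_add, Complex.exp_add, C_mul, C_mul]
  refine ⟨by ring, mul_right_cancel₀ (mul_ne_zero (comp_toPolynomial_ne_zero hQ S)
    (comp_toPolynomial_ne_zero hP S)) ?_⟩
  have hTQPS := congrArg (·.comp S.toPolynomial) hTQP
  simp only [mul_comp, C_comp] at hTQPS
  linear_combination (C (Complex.exp c') * Q.comp S.toPolynomial * P) * hTQPS
    + (C (T 1 - T 0) * Q.comp S.toPolynomial * (P.comp T.toPolynomial).comp S.toPolynomial)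
      * hSQP

theorem pow (hQ : Q ≠ 0) (hP : P ≠ 0) (hT : IsInvariantWithShift Q P E T c) (n : ℕ) :
    IsInvariantWithShift Q P E (T ^ n) (n * c) := by
  induction n with
  | zero => simp [IsInvariantWithShift, toPolynomial_one]
  | succ n ih => simpa [pow_succ, add_mul] using ih.mul hQ hP hT

theorem shift_eq_zero_of_pow_eq_one (hQ : Q ≠ 0) (hP : P ≠ 0)
    (hT : IsInvariantWithShift Q P E T c) {n : ℕ} (hn : n ≠ 0) (hTn : T ^ n = 1) : c = 0 := by
  have h := (hT.pow hQ hP n).1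
  rw [hTn, toPolynomial_one, comp_X, left_eq_add, C_eq_zero] at h
  simpa [hn] using h

theorem multiplier_pow_natDegree_eq_one (hT : IsInvariantWithShift Q P E T c)
    (hE : 0 < E.natDegree) : (T 1 - T 0) ^ E.natDegree = 1 := by
  have h := congrArg leadingCoeff hT.1
  rw [leadingCoeff_comp_toPolynomial, add_comm, leadingCoeff_add_of_degree_lt
    (degree_C_le.trans_lt (natDegree_pos_iff_degree_pos.mp hE))] at h
  exact (mul_eq_left₀ (leadingCoeff_ne_zero.mpr (ne_zero_of_natDegree_gt hE))).mp h

theorem exp_mul_pow_natDegree_eq (hQ : Q.Monic) (hP : P.Monic)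
    (hT : IsInvariantWithShift Q P E T c) :
    Complex.exp c * (T 1 - T 0) ^ Q.natDegree = (T 1 - T 0) ^ (P.natDegree + 1) := by
  have h := congrArg leadingCoeff hT.2
  simp only [leadingCoeff_mul, leadingCoeff_C, leadingCoeff_comp_toPolynomial, hQ.leadingCoeff,
    hP.leadingCoeff] at h
  linear_combination h

theorem apply_zero_eq_zero_of_multiplier_eq_one (hQ : Q.Monic) (hP : P.Monic)
    (hcop : ∀ z, ¬(Q.IsRoot z ∧ P.IsRoot z)) (hE : 0 < E.natDegree)
    (h2 : 2 ≤ Q.natDegree + P.natDegree + E.natDegree) (hT : IsInvariantWithShift Q P E T c)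
    (h1 : T 1 - T 0 = 1) : T 0 = 0 := by
  by_contra hb
  have hTX : T.toPolynomial = X + C (T 0) := by simp [toPolynomial, h1]
  rcases (by omega : E.natDegree = 1 ∨ 2 ≤ E.natDegree) with hE1 | hE2
  · have hexp : Complex.exp c = 1 := by simpa [h1] using hT.exp_mul_pow_natDegree_eq hQ hP
    have hQP (z : ℂ) : Q.eval (z + T 0) * P.eval z = Q.eval z * P.eval (z + T 0) := by
      simpa [hTX, hexp, h1] using congrArg (eval z) hT.2
    rcases (by omega : 0 < Q.natDegree ∨ 0 < P.natDegree) with hQ0 | hP0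
    · exact hQ0.ne' (natDegree_eq_zero_of_forall_isRoot_add hb fun z =>
        isRoot_add_of_forall_eval_add_mul_eq hcop hQP)
    · exact hP0.ne' (natDegree_eq_zero_of_forall_isRoot_add hb fun z =>
        isRoot_add_of_forall_eval_add_mul_eq (fun z h => hcop z h.symm)
          fun z => by linear_combination -hQP z)
  · have hE' : (derivative E).comp (X + C (T 0)) = derivative E := by
      simpa [hTX, derivative_comp] using congrArg derivative hT.1
    have hE'z (z : ℂ) : (derivative E).eval (z + T 0) = (derivative E).eval z := by
      simpa using congrArg (eval z) hE'
    have := natDegree_eq_zero_of_forall_isRoot_add hb fun z hz => (hE'z z).trans hz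
    rw [natDegree_derivative] at this
    omega

end IsInvariantWithShift

end Invariance

def isotropySubgroup (Q P E : ℂ[X]) : Subgroup (ℂ ≃ᵃ[ℂ] ℂ) where
  carrier := {T | LeavesInv Q P E (T 1 - T 0) (T 0)}
  one_mem' := by simp [LeavesInv]
  mul_mem' {T S} hT hS := by
    rcases eq_or_ne Q 0 with rfl | hQ
    · simp [LeavesInv]
    rcases eq_or_ne P 0 with rfl | hP
    · simp [LeavesInv]
    obtain ⟨c, hc⟩ := (leavesInv_iff_exists_isInvariantWithShift hQ hP T).mp hT
    obtain ⟨c', hc'⟩ := (leavesInv_iff_exists_isInvariantWithShift hQ hP S).mp hS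
    exact (leavesInv_iff_exists_isInvariantWithShift hQ hP _).mpr ⟨_, hc.mul hQ hP hc'⟩
  inv_mem' {T} hT := by
    rw [Set.mem_ofPred_eq, leavesInv_iff] at hT ⊢
    intro w
    have hTw := hT (T⁻¹ w)
    rw [show T (T⁻¹ w) = w from T.apply_symm_apply w] at hTw
    have ha : (T⁻¹ 1 - T⁻¹ 0) * (T 1 - T 0) = 1 := by
      rw [← val_multiplierHom, ← val_multiplierHom, ← Units.val_mul, ← map_mul, inv_mul_cancel,
        map_one, Units.val_one]
    linear_combination (-(T⁻¹ 1 - T⁻¹ 0)) * hTw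
      - (Q.eval (T⁻¹ w) * P.eval w * Complex.exp (E.eval (T⁻¹ w))) * ha

namespace isotropySubgroup

variable {Q P E : ℂ[X]} {T : ℂ ≃ᵃ[ℂ] ℂ}

theorem mem_iff : T ∈ isotropySubgroup Q P E ↔
    ∀ w : ℂ, Q.eval (T w) * P.eval w * Complex.exp (E.eval (T w)) =
      (T 1 - T 0) * Q.eval w * P.eval (T w) * Complex.exp (E.eval w) :=
  leavesInv_iff T

theorem exists_isInvariantWithShift (hQ : Q ≠ 0) (hP : P ≠ 0)
    (hT : T ∈ isotropySubgroup Q P E) :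
    ∃ c, IsInvariantWithShift Q P E T c :=
  (leavesInv_iff_exists_isInvariantWithShift hQ hP T).mp hT

theorem apply_zero_eq_zero_of_multiplier_eq_one (hQ : Q.Monic) (hP : P.Monic)
    (hcop : ∀ z, ¬(Q.IsRoot z ∧ P.IsRoot z)) (hE : 0 < E.natDegree)
    (h2 : 2 ≤ Q.natDegree + P.natDegree + E.natDegree) :
    ∀ T ∈ isotropySubgroup Q P E, T 1 - T 0 = 1 → T 0 = 0 := fun _ hT h1 =>
  (exists_isInvariantWithShift hQ.ne_zero hP.ne_zero hT).elim fun _ hc =>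
    hc.apply_zero_eq_zero_of_multiplier_eq_one hQ hP hcop hE h2 h1

theorem multiplierHom_mem_rootsOfUnity (hQ : Q ≠ 0) (hP : P ≠ 0) (hE : 0 < E.natDegree)
    (hT : T ∈ isotropySubgroup Q P E) : multiplierHom T ∈ rootsOfUnity E.natDegree ℂ := by
  obtain ⟨c, hc⟩ := exists_isInvariantWithShift hQ hP hT
  rw [mem_rootsOfUnity', val_multiplierHom]
  exact hc.multiplier_pow_natDegree_eq_one hE

theorem multiplierHom_zpow_eq_one [Finite (isotropySubgroup Q P E)] (hQ : Q.Monic)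
    (hP : P.Monic) (hT : T ∈ isotropySubgroup Q P E) :
    multiplierHom T ^ ((Q.natDegree : ℤ) - P.natDegree - 1) = 1 := by
  obtain ⟨c, hc⟩ := exists_isInvariantWithShift hQ.ne_zero hP.ne_zero hT
  have hc0 : c = 0 := hc.shift_eq_zero_of_pow_eq_one hQ.ne_zero hP.ne_zero Nat.card_pos.ne'
    (congrArg Subtype.val (pow_card_eq_one' (x := (⟨T, hT⟩ : isotropySubgroup Q P E))))
  have h := hc.exp_mul_pow_natDegree_eq hQ hP
  rw [hc0, Complex.exp_zero, one_mul, ← val_multiplierHom, ← Units.val_pow_eq_pow_val,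
    ← Units.val_pow_eq_pow_val, Units.val_inj] at h
  rw [sub_sub, zpow_sub, zpow_natCast, ← Nat.cast_succ, zpow_natCast, h, mul_inv_cancel]

end isotropySubgroup

/-- the affine maps leaving `X ∈ E(s,r,d)` invariant form a
subgroup of the group of affine transformations of `ℂ`; this group is finite
and cyclic, its order divides `d` and `s − r − 1`, and if nontrivial all its
elements fix a common point `C ∈ ℂ`. -/
theorem stmt3 (s r d : ℕ) (hd : 1 ≤ d) (h2 : 2 ≤ s + r + d)
    (lam : ℂ) (Q P E : Polynomial ℂ) (hX : EData s r d lam Q P E) :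
    ∃ G : Subgroup (ℂ ≃ᵃ[ℂ] ℂ),
      (∀ T : ℂ ≃ᵃ[ℂ] ℂ, T ∈ G ↔
        ∀ w : ℂ, Q.eval (T w) * P.eval w * Complex.exp (E.eval (T w)) =
          (T 1 - T 0) * Q.eval w * P.eval (T w) * Complex.exp (E.eval w)) ∧
      Finite G ∧ IsCyclic G ∧
      Nat.card G ∣ d ∧ (Nat.card G : ℤ) ∣ ((s : ℤ) - r - 1) ∧
      (G ≠ ⊥ → ∃ c : ℂ, ∀ T ∈ G, T c = c) := by
  obtain ⟨-, hQ, hP, rfl, rfl, rfl, hcop⟩ := hX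
  have : NeZero E.natDegree := ⟨by omega⟩
  set G := isotropySubgroup Q P E
  have htrans := isotropySubgroup.apply_zero_eq_zero_of_multiplier_eq_one hQ hP hcop hd h2
  have hinj := injective_domRestrict_multiplierHom htrans
  let ψ : G →* rootsOfUnity E.natDegree ℂ := (multiplierHom.domRestrict G).codRestrict _
    fun T => isotropySubgroup.multiplierHom_mem_rootsOfUnity hQ.ne_zero hP.ne_zero hd T.2
  have hψ : Function.Injective ψ := fun T S h => hinj (congrArg Subtype.val h)
  have : Finite G := Finite.of_injective ψ hψ
  have : IsCyclic G := isCyclic_of_injective ψ hψ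
  have hcard_sr : (Nat.card G : ℤ) ∣ (Q.natDegree : ℤ) - P.natDegree - 1 := by
    rw [← IsCyclic.exponent_eq_card, Group.exponent_dvd_iff_forall_zpow_eq_one]
    exact fun T => hinj (by
      rw [map_zpow, map_one]; exact isotropySubgroup.multiplierHom_zpow_eq_one hQ hP T.2)
  refine ⟨G, fun T => isotropySubgroup.mem_iff, ‹_›, ‹_›, ?_, hcard_sr,
    exists_common_fixed_point htrans⟩
  rw [← Complex.card_rootsOfUnity E.natDegree]
  exact Subgroup.card_dvd_of_injective ψ hψ
end
end

section
/- Let s, r ≥ 0 and d ≥ 1 be integers with s + r + d ≥ 2, and suppose that every integer k ≥ 2 dividing both d and s − r − 1 satisfies k ∤ s and k ∤ r. Then for every X ∈ E(s,r,d), the only affine map leaving X invariant is the identity; that is, the isotropy group of every X ∈ E(s,r,d) is trivial. -/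
/-!
Write `T = a X + b`. Invariance says that the polynomial `Q(T)·P` equals `a·Q·P(T)` times
`exp (E − E(T))`; comparing degrees in the logarithmic derivative forces `E − E(T)` to be a
constant `g`. Coprimality of `Q` and `P` then gives `Q(T) = aˢ Q`, `P(T) = aʳ P` and
`aˢ = a·e^g·aʳ`, while the top coefficient of `E − E(T)` gives `a^d = 1`.
If `a = 1`, one of `Q`, `P`, `E'` is a nonconstant polynomial invariant under `w ↦ w + b`,
so `b = 0`. If `a ≠ 1`, `T` has a fixed point `z`, so `g = 0` and `aˢ = aʳ⁺¹`; at `z` one of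
`Q`, `P` does not vanish, so `aˢ = 1` or `aʳ = 1`. The order `k ≥ 2` of `a` then divides `d`,
`s − r − 1` and one of `s`, `r`.
-/

open Polynomial

noncomputable section

theorem IsOfFinOrder.two_le_orderOf {M : Type*} [Monoid M] {x : M} (hx : IsOfFinOrder x)
    (h1 : x ≠ 1) : 2 ≤ orderOf x := by
  have := hx.orderOf_pos
  have := mt orderOf_eq_one_iff.mp h1
  omega

theorem IsOfFinOrder.orderOf_dvd_sub_of_pow_eq_pow {M : Type*} [Monoid M] {x : M}
    (hx : IsOfFinOrder x) {m n : ℕ} (h : x ^ m = x ^ n) : (orderOf x : ℤ) ∣ n - m :=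
  Nat.modEq_iff_dvd.mp (hx.pow_eq_pow_iff_modEq.mp h)

namespace Polynomial

section Domain

variable {R : Type*} [CommRing R] [IsDomain R]

theorem eq_zero_of_comp_X_add_C_eq_self [CharZero R] {p : R[X]} {b : R}
    (hp : p.natDegree ≠ 0) (h : p.comp (X + C b) = p) : b = 0 := by
  by_contra hb
  have hiter : ∀ n : ℕ, p.eval (n * b) = p.eval 0 := by
    intro n
    induction n with
    | zero => simp
    | succ n ih =>
      have hstep := congrArg (eval ((n : R) * b)) h
      rw [eval_comp, eval_add, eval_X, eval_C] at hstep
      rw [Nat.cast_succ, add_one_mul, hstep, ih]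
  have hinj : Function.Injective fun n : ℕ => (n : R) * b := fun m n hmn =>
    Nat.cast_injective (mul_right_cancel₀ hb hmn)
  have hconst : p - C (p.eval 0) = 0 := eq_zero_of_infinite_isRoot _ <|
    Set.infinite_of_injective_forall_mem hinj fun n => by simp [hiter n]
  exact hp (by rw [sub_eq_zero.mp hconst, natDegree_C])

theorem eq_zero_of_sub_comp_X_add_C_eq_C [CharZero R] {p : R[X]} {b c : R}
    (hp : 2 ≤ p.natDegree) (h : p - p.comp (X + C b) = C c) : b = 0 := by
  refine eq_zero_of_comp_X_add_C_eq_self (p := derivative p)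
    (by rw [natDegree_derivative]; omega) ?_
  have := congrArg derivative h
  rw [derivative_sub, derivative_comp, derivative_X_add_C, derivative_C, one_mul,
    sub_eq_zero] at this
  exact this.symm

theorem eq_zero_of_derivative_mul_sub_mul_eq {A B H : R[X]} (hA : A ≠ 0) (hB : B ≠ 0)
    (h : derivative A * B - A * derivative B = H * (A * B)) : H = 0 := by
  by_contra hH
  have hlt : (derivative A * B - A * derivative B).degree < (A * B).degree := by
    refine (degree_sub_le _ _).trans_lt (max_lt ?_ ?_)
    · rw [degree_mul, degree_mul]
      exact WithBot.add_lt_add_right (degree_ne_bot.mpr hB) (degree_derivative_lt hA)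
    · rw [degree_mul, degree_mul]
      exact WithBot.add_lt_add_left (degree_ne_bot.mpr hA) (degree_derivative_lt hB)
  rw [h] at hlt
  exact (degree_le_mul_left _ hH).not_gt (by rwa [mul_comm] at hlt)

theorem comp_eq_C_pow_mul_of_dvd {p : R[X]} {a b : R} (hp : p.Monic) (ha : a ≠ 0)
    (h : p ∣ p.comp (C a * X + C b)) :
    p.comp (C a * X + C b) = C (a ^ p.natDegree) * p := by
  have hT : (C a * X + C b).natDegree = 1 := natDegree_linear ha
  rw [eq_leadingCoeff_mul_of_monic_of_dvd_of_natDegree_le hp h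
      (by rw [natDegree_comp, hT, mul_one]),
    leadingCoeff_comp (by rw [hT]; exact one_ne_zero), hp.leadingCoeff, leadingCoeff_linear ha,
    one_mul]

theorem pow_natDegree_eq_one_of_sub_comp_eq_C {p : R[X]} {a b c : R} (hp : p.natDegree ≠ 0)
    (ha : a ≠ 0) (h : p - p.comp (C a * X + C b) = C c) : a ^ p.natDegree = 1 := by
  have hT : (C a * X + C b).natDegree = 1 := natDegree_linear ha
  have hlead := coeff_comp_degree_mul_degree (p := p) (hT ▸ one_ne_zero)
  rw [hT, mul_one, leadingCoeff_linear ha] at hlead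
  have hcoeff := congrArg (coeff · p.natDegree) h
  simp only [coeff_sub, hlead, coeff_natDegree, coeff_C, if_neg hp, sub_eq_zero] at hcoeff
  exact (mul_eq_left₀ (leadingCoeff_ne_zero.mpr (by rintro rfl; simp at hp))).mp hcoeff.symm

theorem eq_one_of_comp_eq_C_mul_of_eval_ne_zero {p : R[X]} {a b c z : R}
    (h : p.comp (C a * X + C b) = C c * p) (hz : a * z + b = z) (hpz : p.eval z ≠ 0) : c = 1 := by
  have := congrArg (eval z) h
  simp only [eval_comp, eval_add, eval_mul, eval_C, eval_X, hz] at this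
  exact (mul_eq_right₀ hpz).mp this.symm

theorem eq_one_or_eq_one_of_comp_eq_C_mul {Q P : R[X]} {a b c c' z : R}
    (hQ : Q.comp (C a * X + C b) = C c * Q) (hP : P.comp (C a * X + C b) = C c' * P)
    (hz : a * z + b = z) (hQP : ¬(Q.IsRoot z ∧ P.IsRoot z)) : c = 1 ∨ c' = 1 := by
  by_cases hQz : Q.eval z = 0
  · exact .inr (eq_one_of_comp_eq_C_mul_of_eval_ne_zero hP hz fun hPz => hQP ⟨hQz, hPz⟩)
  · exact .inl (eq_one_of_comp_eq_C_mul_of_eval_ne_zero hQ hz hQz)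

theorem eq_zero_of_comp_X_add_C_eq [CharZero R] {Q P E : R[X]} {b g : R}
    (hdeg : 2 ≤ Q.natDegree + P.natDegree + E.natDegree) (hQ : Q.comp (X + C b) = Q)
    (hP : P.comp (X + C b) = P) (hE : E - E.comp (X + C b) = C g) : b = 0 := by
  rcases (by omega : Q.natDegree ≠ 0 ∨ P.natDegree ≠ 0 ∨ 2 ≤ E.natDegree) with h | h | h
  · exact eq_zero_of_comp_X_add_C_eq_self h hQ
  · exact eq_zero_of_comp_X_add_C_eq_self h hP
  · exact eq_zero_of_sub_comp_X_add_C_eq_C h hE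

end Domain

theorem comp_eq_C_pow_mul_of_comp_mul_eq {K : Type*} [Field K] {Q P : K[X]} {a b c : K}
    (hQ : Q.Monic) (hP : P.Monic) (hQP : IsCoprime Q P) (ha : a ≠ 0) (hc : c ≠ 0)
    (h : Q.comp (C a * X + C b) * P = C c * (Q * P.comp (C a * X + C b))) :
    Q.comp (C a * X + C b) = C (a ^ Q.natDegree) * Q ∧
      P.comp (C a * X + C b) = C (a ^ P.natDegree) * P ∧
      a ^ Q.natDegree = c * a ^ P.natDegree := by
  have hQT := comp_eq_C_pow_mul_of_dvd hQ ha <|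
    hQP.dvd_of_dvd_mul_right ⟨C c * P.comp (C a * X + C b), by rw [h]; ring⟩
  have hPT := comp_eq_C_pow_mul_of_dvd (b := b) hP ha <|
    ((isCoprime_mul_unit_left_right (isUnit_C.mpr hc.isUnit) P Q).mpr hQP.symm).dvd_of_dvd_mul_left
      ⟨Q.comp (C a * X + C b), by rw [mul_assoc, ← h, mul_comm]⟩
  refine ⟨hQT, hPT, C_injective (mul_right_cancel₀ (mul_ne_zero hQ.ne_zero hP.ne_zero) ?_)⟩
  rw [hQT, hPT] at h
  rw [C_mul]
  linear_combination h

theorem derivative_mul_sub_mul_eq_of_eval_eq_mul_exp {A B G : ℂ[X]}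
    (h : ∀ w, A.eval w = B.eval w * Complex.exp (G.eval w)) :
    derivative A * B - A * derivative B = derivative G * (A * B) := by
  refine Polynomial.funext fun w => ?_
  have hA : HasDerivAt (fun z => B.eval z * Complex.exp (G.eval z)) ((derivative A).eval w) w := by
    simpa only [← h] using A.hasDerivAt w
  have hBG := (B.hasDerivAt w).mul (G.hasDerivAt w).cexp
  simp only [eval_sub, eval_mul, h w, hA.unique hBG]
  ring

theorem derivative_eq_zero_of_eval_eq_mul_exp {A B G : ℂ[X]} (hA : A ≠ 0)
    (h : ∀ w, A.eval w = B.eval w * Complex.exp (G.eval w)) : derivative G = 0 := by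
  have hB : B ≠ 0 := by
    rintro rfl
    exact hA (Polynomial.funext fun w => by simpa using h w)
  exact eq_zero_of_derivative_mul_sub_mul_eq hA hB (derivative_mul_sub_mul_eq_of_eval_eq_mul_exp h)

end Polynomial

theorem LeavesInv.exists_sub_comp_eq_C {Q P E : ℂ[X]} {a b : ℂ} (hQ : Q ≠ 0) (hP : P ≠ 0)
    (ha : a ≠ 0) (h : LeavesInv Q P E a b) :
    ∃ g, E - E.comp (C a * X + C b) = C g ∧
      Q.comp (C a * X + C b) * P = C (a * Complex.exp g) * (Q * P.comp (C a * X + C b)) := by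
  set T := C a * X + C b with hT
  have hTdeg : T.natDegree ≠ 0 := by rw [natDegree_linear ha]; exact one_ne_zero
  have hQT : Q.comp T ≠ 0 := leadingCoeff_ne_zero.mp <| by
    rw [leadingCoeff_comp hTdeg, leadingCoeff_linear ha]
    exact mul_ne_zero (leadingCoeff_ne_zero.mpr hQ) (pow_ne_zero _ ha)
  have heval : ∀ w, (Q.comp T * P).eval w =
      (C a * (Q * P.comp T)).eval w * Complex.exp ((E - E.comp T).eval w) := by
    intro w
    simp only [hT, eval_mul, eval_comp, eval_add, eval_C, eval_X, eval_sub, Complex.exp_sub]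
    rw [mul_div_assoc', eq_div_iff (Complex.exp_ne_zero _)]
    linear_combination h w
  have hG := eq_C_of_derivative_eq_zero <|
    derivative_eq_zero_of_eval_eq_mul_exp (mul_ne_zero hQT hP) heval
  refine ⟨_, hG, Polynomial.funext fun w => ?_⟩
  rw [heval w, hG]
  simp only [eval_mul, eval_C, coeff_C_zero]
  ring

/-- if every integer `k ≥ 2` dividing both `d` and `s−r−1`
satisfies `k ∤ s` and `k ∤ r`, then every `X ∈ E(s,r,d)` has trivial isotropy
group. -/
theorem stmt6 (s r d : ℕ) (hd : 1 ≤ d) (h2 : 2 ≤ s + r + d)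
    (hk : ∀ k : ℕ, 2 ≤ k → (k : ℤ) ∣ (d : ℤ) → (k : ℤ) ∣ ((s : ℤ) - r - 1) →
      ¬ k ∣ s ∧ ¬ k ∣ r)
    (lam : ℂ) (Q P E : Polynomial ℂ) (hX : EData s r d lam Q P E)
    (a b : ℂ) (ha : a ≠ 0) (hinv : LeavesInv Q P E a b) :
    a = 1 ∧ b = 0 := by
  obtain ⟨-, hQ, hP, rfl, rfl, rfl, hroot⟩ := hX
  have hQP : IsCoprime Q P :=
    (isCoprime_iff_aeval_ne_zero_of_isAlgClosed ℂ ℂ Q P).mpr fun z => by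
      simpa only [coe_aeval_eq_eval, ← not_and_or, IsRoot.def] using hroot z
  obtain ⟨g, hE, hpoly⟩ := hinv.exists_sub_comp_eq_C hQ.ne_zero hP.ne_zero ha
  obtain ⟨hQT, hPT, hlc⟩ := comp_eq_C_pow_mul_of_comp_mul_eq hQ hP hQP ha
    (mul_ne_zero ha (Complex.exp_ne_zero g)) hpoly
  have hEa : a ^ E.natDegree = 1 := pow_natDegree_eq_one_of_sub_comp_eq_C (by omega) ha hE
  by_cases ha1 : a = 1
  · subst ha1
    simp only [C_1, one_mul, one_pow] at hQT hPT hE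
    exact ⟨rfl, eq_zero_of_comp_X_add_C_eq h2 hQT hPT hE⟩
  · exfalso
    obtain ⟨z, hz⟩ : ∃ z, a * z + b = z :=
      ⟨b / (1 - a), by field_simp [sub_ne_zero.mpr (Ne.symm ha1)]; ring⟩
    have hg : g = 0 := by simpa [hz] using (congrArg (eval z) hE).symm
    have hfin : IsOfFinOrder a := isOfFinOrder_iff_pow_eq_one.mpr ⟨_, hd, hEa⟩
    have hsr := hfin.orderOf_dvd_sub_of_pow_eq_pow (m := P.natDegree + 1) (n := Q.natDegree)
      (by rw [hlc, hg, Complex.exp_zero, mul_one, pow_succ'])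
    obtain ⟨hs, hr⟩ := hk _ (hfin.two_le_orderOf ha1)
      (Int.natCast_dvd_natCast.mpr (orderOf_dvd_of_pow_eq_one hEa))
      (by push_cast at hsr; rwa [sub_sub])
    rcases eq_one_or_eq_one_of_comp_eq_C_mul hQT hPT hz (hroot z) with h | h
    · exact hs (orderOf_dvd_of_pow_eq_one h)
    · exact hr (orderOf_dvd_of_pow_eq_one h)
end
end

section
/- Let k ≥ 2 be an integer dividing d ≥ 1 and s − r − 1, and suppose k | s (hence k ∤ r). Write s = k·k_s, r = k·k_r + ν with k_r ≥ 0 and ν ≥ 1 satisfying k | (ν + 1), and d = k·k_d + μ with k_d, μ ≥ 0 and k | μ. Fix C ∈ ℂ, λ ∈ ℂ \ {0}, pairwise distinct α_1, …, α_{k_s} ∈ ℂ \ {0}, pairwise distinct β_1, …, β_{k_r} ∈ ℂ \ {0} with {α_i} ∩ {β_j} = ∅, and arbitrary γ_1, …, γ_{k_d} ∈ ℂ. Then the data λ, Q(z) = ∏_{j=1}^{k_s}((z−C)^k − α_j), P(z) = (z−C)^ν·∏_{j=1}^{k_r}((z−C)^k − β_j), E(z) = (z−C)^μ·∏_{j=1}^{k_d}((z−C)^k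 − γ_j) defines an element X ∈ E(s,r,d) (Q, P are monic of degrees s, r with no common root and deg E = d), and X is left invariant by the rotation of order k about C; in particular the isotropy group of X is nontrivial and C is a pole of X of multiplicity ν. -/
/-!
Each of `Q`, `P / (z - C)^ν` and `E / (z - C)^μ` is `q ∘ (z - C)^k` for a product `q` of linear
factors (`X - α_j`, `X - β_j`, `X - γ_j`). The rotation `T(w) = C + a (w - C)` with `a^k = 1`
fixes `(z - C)^k`, hence these factors, and multiplies `(z - C)^m` by `a^m`. As `k` divides `μ`
and `ν + 1`, `E ∘ T = E` and `Q(Tw) P(w) = a Q(w) P(Tw)`. Monicity, degrees, coprimality and the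
multiplicity of `C` as a root of `P` reduce to the same facts about the `q`'s, using that `0` is
not among the `α_j`, `β_j`.
-/

open Polynomial

noncomputable section

namespace Polynomial

section CommRing

variable {R : Type*} [CommRing R]

theorem prod_X_sub_C_pow_sub_C_eq_comp {ι : Type*} (s : Finset ι) (c : R) (k : ℕ)
    (e : ι → R) :
    ∏ j ∈ s, ((X - C c) ^ k - C (e j)) = (∏ j ∈ s, (X - C (e j))).comp ((X - C c) ^ k) := by
  simp [prod_comp]

theorem eval_X_sub_C_pow_rotate (a c w : R) (m : ℕ) :
    ((X - C c) ^ m).eval (a * w + (c - a * c)) = a ^ m * ((X - C c) ^ m).eval w := by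
  simp only [eval_pow, eval_sub, eval_X, eval_C]
  rw [show a * w + (c - a * c) - c = a * (w - c) by ring, mul_pow]

theorem eval_comp_X_sub_C_pow_rotate {a : R} {k : ℕ} (ha : a ^ k = 1) (p : R[X]) (c w : R) :
    (p.comp ((X - C c) ^ k)).eval (a * w + (c - a * c)) = (p.comp ((X - C c) ^ k)).eval w := by
  rw [eval_comp, eval_comp, eval_X_sub_C_pow_rotate, ha, one_mul]

theorem eval_X_sub_C_pow_mul_comp_rotate {a : R} {k : ℕ} (ha : a ^ k = 1) (m : ℕ) (p : R[X])
    (c w : R) :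
    ((X - C c) ^ m * p.comp ((X - C c) ^ k)).eval (a * w + (c - a * c)) =
      a ^ m * ((X - C c) ^ m * p.comp ((X - C c) ^ k)).eval w := by
  rw [eval_mul, eval_mul, eval_X_sub_C_pow_rotate, eval_comp_X_sub_C_pow_rotate ha, mul_assoc]

end CommRing

section IsDomain

variable {R : Type*} [CommRing R] [IsDomain R] {k : ℕ}

theorem Monic.comp_X_sub_C_pow {p : R[X]} (hp : p.Monic) (hk : k ≠ 0) (c : R) :
    (p.comp ((X - C c) ^ k)).Monic :=
  hp.comp ((monic_X_sub_C c).pow k) (by simpa using hk)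

theorem natDegree_comp_X_sub_C_pow (p : R[X]) (c : R) :
    (p.comp ((X - C c) ^ k)).natDegree = k * p.natDegree := by
  rw [natDegree_comp, natDegree_pow, natDegree_X_sub_C, mul_one, mul_comm]

theorem Monic.X_sub_C_pow_mul_comp_X_sub_C_pow {p : R[X]} (hp : p.Monic) (hk : k ≠ 0) (c : R)
    (m : ℕ) : ((X - C c) ^ m * p.comp ((X - C c) ^ k)).Monic :=
  ((monic_X_sub_C c).pow m).mul (hp.comp_X_sub_C_pow hk c)

theorem natDegree_X_sub_C_pow_mul_comp {p : R[X]} (hp : p.Monic) (hk : k ≠ 0) (c : R) (m : ℕ) :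
    ((X - C c) ^ m * p.comp ((X - C c) ^ k)).natDegree = m + k * p.natDegree := by
  rw [((monic_X_sub_C c).pow m).natDegree_mul (hp.comp_X_sub_C_pow hk c), natDegree_pow,
    natDegree_X_sub_C, mul_one, natDegree_comp_X_sub_C_pow]

theorem rootMultiplicity_X_sub_C_pow_mul_comp {p : R[X]} (hp : p.eval 0 ≠ 0) (hk : k ≠ 0)
    (c : R) (m : ℕ) : ((X - C c) ^ m * p.comp ((X - C c) ^ k)).rootMultiplicity c = m := by
  have hc : ¬ (p.comp ((X - C c) ^ k)).IsRoot c := by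
    simpa [IsRoot, eval_comp, zero_pow hk] using hp
  have hne : p.comp ((X - C c) ^ k) ≠ 0 := fun h => hc (by simp [h])
  rw [rootMultiplicity_mul (mul_ne_zero (pow_ne_zero m (X_sub_C_ne_zero c)) hne),
    rootMultiplicity_X_sub_C_pow, rootMultiplicity_eq_zero hc, add_zero]

theorem not_isRoot_comp_and_X_sub_C_pow_mul_comp {q p : R[X]} (hk : k ≠ 0)
    (hq : q.eval 0 ≠ 0) (hqp : ∀ x, ¬ (q.IsRoot x ∧ p.IsRoot x)) (c : R) (m : ℕ) (z : R) :
    ¬ ((q.comp ((X - C c) ^ k)).IsRoot z ∧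
      ((X - C c) ^ m * p.comp ((X - C c) ^ k)).IsRoot z) := by
  rintro ⟨hqz, hpz⟩
  simp only [IsRoot, eval_mul, eval_comp, eval_pow, eval_sub, eval_X, eval_C,
    mul_eq_zero] at hqz hpz
  rcases hpz with hzc | hpz
  · rw [sub_eq_zero.mp (eq_zero_of_pow_eq_zero hzc), sub_self, zero_pow hk] at hqz
    exact hq hqz
  · exact hqp _ ⟨hqz, hpz⟩

theorem isRoot_prod_X_sub_C_iff {ι : Type*} (s : Finset ι) (e : ι → R) (x : R) :
    (∏ j ∈ s, (X - C (e j))).IsRoot x ↔ ∃ j ∈ s, e j = x := by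
  simp only [isRoot_prod, root_X_sub_C]

theorem eval_zero_prod_X_sub_C_ne_zero {ι : Type*} {s : Finset ι} {e : ι → R}
    (he : ∀ j ∈ s, e j ≠ 0) : (∏ j ∈ s, (X - C (e j))).eval 0 ≠ 0 := by
  simpa [eval_prod, Finset.prod_ne_zero_iff] using he

end IsDomain

end Polynomial

theorem leavesInv_of_eval_eq {Q P E : ℂ[X]} {a b u : ℂ} (hau : a * u = 1)
    (hQ : ∀ w, Q.eval (a * w + b) = Q.eval w) (hP : ∀ w, P.eval (a * w + b) = u * P.eval w)
    (hE : ∀ w, E.eval (a * w + b) = E.eval w) : LeavesInv Q P E a b := by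
  intro w
  rw [hQ, hP, hE]
  linear_combination -(Q.eval w * P.eval w * Complex.exp (E.eval w)) * hau

theorem leavesInv_rotation {a c : ℂ} {k ν μ : ℕ} (hk : a ^ k = 1) (hν : a ^ (ν + 1) = 1)
    (hμ : a ^ μ = 1) (q p e : ℂ[X]) :
    LeavesInv (q.comp ((X - C c) ^ k)) ((X - C c) ^ ν * p.comp ((X - C c) ^ k))
      ((X - C c) ^ μ * e.comp ((X - C c) ^ k)) a (c - a * c) :=
  leavesInv_of_eval_eq (by rw [← pow_succ', hν]) (eval_comp_X_sub_C_pow_rotate hk q c)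
    (eval_X_sub_C_pow_mul_comp_rotate hk ν p c)
    (fun w => by rw [eval_X_sub_C_pow_mul_comp_rotate hk, hμ, one_mul])

theorem stmt7_general (s r d k ks kr kd ν μ : ℕ)
    (hk : 2 ≤ k)
    (hs : s = k * ks) (hr : r = k * kr + ν) (hνk : k ∣ (ν + 1))
    (hdd : d = k * kd + μ) (hμ : k ∣ μ)
    (c lam : ℂ) (hlam : lam ≠ 0)
    (α : Fin ks → ℂ) (hα0 : ∀ j, α j ≠ 0)
    (β : Fin kr → ℂ) (hβ0 : ∀ j, β j ≠ 0)
    (hαβ : ∀ i j, α i ≠ β j)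
    (γ : Fin kd → ℂ) :
    let Q : Polynomial ℂ := ∏ j : Fin ks, ((X - C c) ^ k - C (α j))
    let P : Polynomial ℂ :=
      (X - C c) ^ ν * ∏ j : Fin kr, ((X - C c) ^ k - C (β j))
    let E : Polynomial ℂ :=
      (X - C c) ^ μ * ∏ j : Fin kd, ((X - C c) ^ k - C (γ j))
    EData s r d lam Q P E ∧
      P.rootMultiplicity c = ν ∧
      (∀ a : ℂ, IsPrimitiveRoot a k → LeavesInv Q P E a (c - a * c)) ∧
      (∃ a b : ℂ, a ≠ 0 ∧ (a, b) ≠ (1, 0) ∧ LeavesInv Q P E a b) := by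
  simp only [prod_X_sub_C_pow_sub_C_eq_comp]
  have hk0 : k ≠ 0 := by omega
  have hqα : (∏ j, (X - C (α j))).eval 0 ≠ 0 :=
    eval_zero_prod_X_sub_C_ne_zero fun j _ => hα0 j
  have hqβ : (∏ j, (X - C (β j))).eval 0 ≠ 0 :=
    eval_zero_prod_X_sub_C_ne_zero fun j _ => hβ0 j
  have hqαβ :
      ∀ x, ¬ ((∏ j, (X - C (α j))).IsRoot x ∧ (∏ j, (X - C (β j))).IsRoot x) := by
    simp only [isRoot_prod_X_sub_C_iff]
    rintro x ⟨⟨i, -, rfl⟩, j, -, hj⟩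
    exact hαβ i j hj.symm
  have hinv (a : ℂ) (ha : IsPrimitiveRoot a k) := leavesInv_rotation (c := c) ha.pow_eq_one
    ((ha.pow_eq_one_iff_dvd _).2 hνk) ((ha.pow_eq_one_iff_dvd _).2 hμ)
    (∏ j, (X - C (α j))) (∏ j, (X - C (β j))) (∏ j, (X - C (γ j)))
  have hζ := Complex.isPrimitiveRoot_exp k hk0
  refine ⟨⟨hlam, (monic_prod_X_sub_C _ _).comp_X_sub_C_pow hk0 c,
      (monic_prod_X_sub_C _ _).X_sub_C_pow_mul_comp_X_sub_C_pow hk0 c ν, ?_, ?_, ?_,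
      not_isRoot_comp_and_X_sub_C_pow_mul_comp hk0 hqα hqαβ c ν⟩,
    rootMultiplicity_X_sub_C_pow_mul_comp hqβ hk0 c ν, hinv,
    _, _, hζ.ne_zero hk0, fun h => hζ.ne_one hk (congrArg Prod.fst h), hinv _ hζ⟩
  all_goals
    simp only [natDegree_comp_X_sub_C_pow,
      natDegree_X_sub_C_pow_mul_comp (monic_prod_X_sub_C _ _) hk0,
      natDegree_finsetProd_X_sub_C_eq_card, Finset.card_univ, Fintype.card_fin]
    omega

/-- realization of vector fields with nontrivial symmetry when
`k ∣ s` (so `C` is a pole of multiplicity `ν`): the explicit data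
`Q = ∏ ((z−C)^k − α_j)`, `P = (z−C)^ν · ∏ ((z−C)^k − β_j)`,
`E = (z−C)^μ · ∏ ((z−C)^k − γ_j)` defines an element of `E(s,r,d)` left
invariant by the rotation of order `k` about `C`. -/
theorem stmt7 (s r d k ks kr kd ν μ : ℕ)
    (hk : 2 ≤ k) (hd1 : 1 ≤ d)
    (hkd : (k : ℤ) ∣ (d : ℤ)) (hksr : (k : ℤ) ∣ ((s : ℤ) - r - 1)) (hks : k ∣ s)
    (hs : s = k * ks) (hr : r = k * kr + ν) (hν : 1 ≤ ν) (hνk : k ∣ (ν + 1))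
    (hdd : d = k * kd + μ) (hμ : k ∣ μ)
    (c lam : ℂ) (hlam : lam ≠ 0)
    (α : Fin ks → ℂ) (hα0 : ∀ j, α j ≠ 0) (hαinj : Function.Injective α)
    (β : Fin kr → ℂ) (hβ0 : ∀ j, β j ≠ 0) (hβinj : Function.Injective β)
    (hαβ : ∀ i j, α i ≠ β j)
    (γ : Fin kd → ℂ) :
    let Q : Polynomial ℂ := ∏ j : Fin ks, ((X - C c) ^ k - C (α j))
    let P : Polynomial ℂ :=
      (X - C c) ^ ν * ∏ j : Fin kr, ((X - C c) ^ k - C (β j))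
    let E : Polynomial ℂ :=
      (X - C c) ^ μ * ∏ j : Fin kd, ((X - C c) ^ k - C (γ j))
    EData s r d lam Q P E ∧
      P.rootMultiplicity c = ν ∧
      (∀ a : ℂ, IsPrimitiveRoot a k → LeavesInv Q P E a (c - a * c)) ∧
      (∃ a b : ℂ, a ≠ 0 ∧ (a, b) ≠ (1, 0) ∧ LeavesInv Q P E a b) :=
  stmt7_general s r d k ks kr kd ν μ hk hs hr hνk hdd hμ c lam hlam α hα0 β hβ0 hαβ γ
end
end

section
/- Let k ≥ 2 be an integer dividing d ≥ 1 and s − r − 1, and suppose k | r (hence k ∤ s). Write r = k·k_r, s = k·k_s + ν with k_s ≥ 0 and ν ≥ 1 satisfying k | (ν − 1), and d = k·k_d + μ with k_d, μ ≥ 0 and k | μ. Fix C ∈ ℂ, λ ∈ ℂ \ {0}, pairwise distinct α_1, …, α_{k_s} ∈ ℂ \ {0}, pairwise distinct β_1, …, β_{k_r} ∈ ℂ \ {0} with {α_i} ∩ {β_j} = ∅, and arbitrary γ_1, …, γ_{k_d} ∈ ℂ. Then the data λ, Q(z) = (z−C)^ν·∏_{j=1}^{k_s}((z−C)^k − α_j),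 P(z) = ∏_{j=1}^{k_r}((z−C)^k − β_j), E(z) = (z−C)^μ·∏_{j=1}^{k_d}((z−C)^k − γ_j) defines an element X ∈ E(s,r,d) (Q, P are monic of degrees s, r with no common root and deg E = d), and X is left invariant by the rotation of order k about C; in particular the isotropy group of X is nontrivial and C is a zero of X of multiplicity ν. -/
/-!
Every factor `(z - C)^k - t` of `Q`, `P`, `E` is unchanged under `z - C ↦ a (z - C)` when `a^k = 1`,
so the rotation multiplies `Q`, `P`, `E` by `a^ν = a`, `1`, `a^μ = 1` respectively, which is exactly
the invariance identity. The remaining claims are degree and root bookkeeping: the roots of `P` are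
the `k`-th roots of the `β_j` around `C`, and these avoid both `C` (as `β_j ≠ 0`) and the roots
of `Q` (as `α_i ≠ β_j`).
-/

open Polynomial

noncomputable section

section RotationPoly

variable {R ι κ : Type*} [CommRing R] [Fintype ι] [Fintype κ]

def rotationPoly (c : R) (k m : ℕ) (v : ι → R) : R[X] :=
  (X - C c) ^ m * ∏ j, ((X - C c) ^ k - C (v j))

variable (c : R) {k : ℕ} (m : ℕ) (v : ι → R)

theorem eval_rotationPoly (z : R) :
    (rotationPoly c k m v).eval z = (z - c) ^ m * ∏ j, ((z - c) ^ k - v j) := by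
  simp [rotationPoly, eval_prod]

theorem eval_rotationPoly_rotate {a : R} (ha : a ^ k = 1) (w : R) :
    (rotationPoly c k m v).eval (a * w + (c - a * c)) = a ^ m * (rotationPoly c k m v).eval w := by
  simp only [eval_rotationPoly, show a * w + (c - a * c) - c = a * (w - c) by ring, mul_pow, ha,
    one_mul]
  ring

theorem monic_X_sub_C_pow_sub_C (hk : k ≠ 0) (t : R) : ((X - C c) ^ k - C t).Monic := by
  simpa [sub_comp, pow_comp] using (monic_X_pow_sub_C t hk).comp_X_sub_C c

theorem monic_rotationPoly (hk : k ≠ 0) : (rotationPoly c k m v).Monic :=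
  ((monic_X_sub_C c).pow m).mul
    (monic_prod_of_monic _ _ fun j _ => monic_X_sub_C_pow_sub_C c hk (v j))

theorem natDegree_rotationPoly [Nontrivial R] (hk : k ≠ 0) :
    (rotationPoly c k m v).natDegree = m + Fintype.card ι * k := by
  have hfactor (j : ι) := monic_X_sub_C_pow_sub_C c hk (v j)
  rw [rotationPoly, ((monic_X_sub_C c).pow m).natDegree_mul
      (monic_prod_of_monic _ _ fun j _ => hfactor j),
    natDegree_prod_of_monic _ _ fun j _ => hfactor j]
  simp [natDegree_sub_C, (monic_X_sub_C c).natDegree_pow]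

variable [IsDomain R]

theorem rootMultiplicity_rotationPoly (hk : k ≠ 0) (hv : ∀ j, v j ≠ 0) :
    (rotationPoly c k m v).rootMultiplicity c = m := by
  have hprod : ¬ (∏ j, ((X - C c) ^ k - C (v j))).IsRoot c := by
    simp [eval_prod, Finset.prod_eq_zero_iff, zero_pow hk, hv]
  rw [rotationPoly, rootMultiplicity_mul (monic_rotationPoly c m v hk).ne_zero,
    rootMultiplicity_X_sub_C_pow, rootMultiplicity_eq_zero hprod, add_zero]

theorem isRoot_rotationPoly_iff (z : R) :
    (rotationPoly c k m v).IsRoot z ↔ (z = c ∧ m ≠ 0) ∨ ∃ j, (z - c) ^ k = v j := by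
  simp [IsRoot, eval_rotationPoly, Finset.prod_eq_zero_iff, sub_eq_zero]

theorem rotationPoly_not_isRoot_and (hk : k ≠ 0) (u : κ → R) (hv : ∀ j, v j ≠ 0)
    (huv : ∀ i j, u i ≠ v j) (z : R) :
    ¬ ((rotationPoly c k m u).IsRoot z ∧ (rotationPoly c k 0 v).IsRoot z) := by
  simp only [isRoot_rotationPoly_iff, ne_eq, not_true_eq_false, and_false, false_or]
  rintro ⟨(⟨rfl, -⟩ | ⟨i, hi⟩), j, hj⟩
  · exact hv j (by rw [← hj, sub_self, zero_pow hk])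
  · exact huv i j (hi ▸ hj)

end RotationPoly

theorem leavesInv_of_eval {Q P E : ℂ[X]} {a b : ℂ} (hQ : ∀ w, Q.eval (a * w + b) = a * Q.eval w)
    (hP : ∀ w, P.eval (a * w + b) = P.eval w) (hE : ∀ w, E.eval (a * w + b) = E.eval w) :
    LeavesInv Q P E a b := by
  intro w
  rw [hQ, hP, hE]

theorem stmt8_general (s r d k ks kr kd ν μ : ℕ)
    (hk : 2 ≤ k)
    (hr : r = k * kr) (hs : s = k * ks + ν) (hν : 1 ≤ ν) (hνk : k ∣ (ν - 1))
    (hdd : d = k * kd + μ) (hμ : k ∣ μ)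
    (c lam : ℂ) (hlam : lam ≠ 0)
    (α : Fin ks → ℂ) (hα0 : ∀ j, α j ≠ 0)
    (β : Fin kr → ℂ) (hβ0 : ∀ j, β j ≠ 0)
    (hαβ : ∀ i j, α i ≠ β j)
    (γ : Fin kd → ℂ) :
    let Q : Polynomial ℂ :=
      (X - C c) ^ ν * ∏ j : Fin ks, ((X - C c) ^ k - C (α j))
    let P : Polynomial ℂ := ∏ j : Fin kr, ((X - C c) ^ k - C (β j))
    let E : Polynomial ℂ :=
      (X - C c) ^ μ * ∏ j : Fin kd, ((X - C c) ^ k - C (γ j))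
    EData s r d lam Q P E ∧
      Q.rootMultiplicity c = ν ∧
      (∀ a : ℂ, IsPrimitiveRoot a k → LeavesInv Q P E a (c - a * c)) ∧
      (∃ a b : ℂ, a ≠ 0 ∧ (a, b) ≠ (1, 0) ∧ LeavesInv Q P E a b) := by
  have hk0 : k ≠ 0 := by omega
  have hP : ∏ j, ((X - C c) ^ k - C (β j)) = rotationPoly c k 0 β := (one_mul _).symm
  change EData s r d lam (rotationPoly c k ν α) _ (rotationPoly c k μ γ) ∧ _
  rw [hP]
  have hinv (a : ℂ) (ha : IsPrimitiveRoot a k) :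
      LeavesInv (rotationPoly c k ν α) (rotationPoly c k 0 β) (rotationPoly c k μ γ) a
        (c - a * c) := by
    have haν : a ^ ν = a ^ 1 := pow_eq_pow_of_modEq ((Nat.modEq_iff_dvd' hν).mpr hνk).symm ha.1
    have haμ : a ^ μ = a ^ 0 := pow_eq_pow_of_modEq (Nat.modEq_zero_iff_dvd.mpr hμ) ha.1
    refine leavesInv_of_eval (fun w => ?_) (fun w => ?_) (fun w => ?_) <;>
      simp [eval_rotationPoly_rotate _ _ _ ha.1, haν, haμ]
  refine ⟨⟨hlam, monic_rotationPoly c ν α hk0, monic_rotationPoly c 0 β hk0, ?_, ?_, ?_,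
    rotationPoly_not_isRoot_and c ν β hk0 α hβ0 hαβ⟩,
    rootMultiplicity_rotationPoly c ν α hk0 hα0, hinv, ?_⟩
  · simp [natDegree_rotationPoly _ _ _ hk0, hs, add_comm, mul_comm]
  · simp [natDegree_rotationPoly _ _ _ hk0, hr, mul_comm]
  · simp [natDegree_rotationPoly _ _ _ hk0, hdd, add_comm, mul_comm]
  · have ha := Complex.isPrimitiveRoot_exp k hk0
    exact ⟨_, _, ha.ne_zero hk0, fun h => ha.ne_one (by omega) (congrArg Prod.fst h), hinv _ ha⟩

/-- realization of vector fields with nontrivial symmetry when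
`k ∣ r` (so `C` is a zero of multiplicity `ν`): the explicit data
`Q = (z−C)^ν · ∏ ((z−C)^k − α_j)`, `P = ∏ ((z−C)^k − β_j)`,
`E = (z−C)^μ · ∏ ((z−C)^k − γ_j)` defines an element of `E(s,r,d)` left
invariant by the rotation of order `k` about `C`. -/
theorem stmt8 (s r d k ks kr kd ν μ : ℕ)
    (hk : 2 ≤ k) (hd1 : 1 ≤ d)
    (hkd : (k : ℤ) ∣ (d : ℤ)) (hksr : (k : ℤ) ∣ ((s : ℤ) - r - 1)) (hkr : k ∣ r)
    (hr : r = k * kr) (hs : s = k * ks + ν) (hν : 1 ≤ ν) (hνk : k ∣ (ν - 1))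
    (hdd : d = k * kd + μ) (hμ : k ∣ μ)
    (c lam : ℂ) (hlam : lam ≠ 0)
    (α : Fin ks → ℂ) (hα0 : ∀ j, α j ≠ 0) (hαinj : Function.Injective α)
    (β : Fin kr → ℂ) (hβ0 : ∀ j, β j ≠ 0) (hβinj : Function.Injective β)
    (hαβ : ∀ i j, α i ≠ β j)
    (γ : Fin kd → ℂ) :
    let Q : Polynomial ℂ :=
      (X - C c) ^ ν * ∏ j : Fin ks, ((X - C c) ^ k - C (α j))
    let P : Polynomial ℂ := ∏ j : Fin kr, ((X - C c) ^ k - C (β j))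
    let E : Polynomial ℂ :=
      (X - C c) ^ μ * ∏ j : Fin kd, ((X - C c) ^ k - C (γ j))
    EData s r d lam Q P E ∧
      Q.rootMultiplicity c = ν ∧
      (∀ a : ℂ, IsPrimitiveRoot a k → LeavesInv Q P E a (c - a * c)) ∧
      (∃ a b : ℂ, a ≠ 0 ∧ (a, b) ≠ (1, 0) ∧ LeavesInv Q P E a b) :=
  stmt8_general s r d k ks kr kd ν μ hk hr hs hν hνk hdd hμ c lam hlam α hα0 β hβ0 hαβ γ
end
end

section
/- Let s, r ≥ 0 and d ≥ 1 be integers, and let X ∈ E(s,r,d) have data (λ, Q, P, E) such that all roots of Q are simple and all roots of P are simple. Suppose a nontrivial affine map T(w) = a·w + b leaves X invariant and the fixed point C = b/(1 − a) of T is a root of P. Then a = −1 (so T is the rotation of order 2 about C), r is odd, s is even, d is even, and the group of all affine maps leaving X invariant is exactly {id, T}, a group of order 2. -/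
open Polynomial

noncomputable section

/-!
An invariant affine map `T` permutes the zeros and the poles, which are simple, so `Q ∘ T = a^s Q`
and `P ∘ T = a^r P`. Cancelling these, `exp (E ∘ T - E)` is constant off a finite set, hence
everywhere, so `E ∘ T = E + K` with `e^K a^s = a^(r+1)` (a nonconstant polynomial is onto). A
translation cannot preserve the nonempty finite set of poles, so `a ≠ 1` and `T` has the fixed
point `c`. Evaluating at `c` gives `K = 0` and, as `c` is not a zero, `a^s = 1`; differentiating
`P ∘ T = a^r P` at the simple pole `c` gives `a^r = a`. Hence `a^2 = 1`, `a = -1`, and comparing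
leading coefficients in `E ∘ T = E` gives `(-1)^d = 1`. Any other symmetry `T'` that is not a
translation fixes a pole as well (otherwise `T' ∘ T` could not satisfy the above), so it is also a
rotation by `-1`, and `T' ∘ T` is a translation preserving `E`, hence trivial.
-/

theorem affine_fixedPoint {k : Type*} [Field k] {a b : k} (ha1 : a ≠ 1) :
    a * (b / (1 - a)) + b = b / (1 - a) := by
  have : (1 : k) - a ≠ 0 := sub_ne_zero.2 (Ne.symm ha1)
  field_simp
  ring

namespace Polynomial

section Field

variable {k : Type*} [Field k]

theorem leadingCoeff_comp_affine {R : k[X]} {a b : k} (ha : a ≠ 0) :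
    (R.comp (C a * X + C b)).leadingCoeff = R.leadingCoeff * a ^ R.natDegree := by
  rw [leadingCoeff_comp (by rw [natDegree_linear ha]; exact one_ne_zero), leadingCoeff_linear ha]

theorem comp_affine_eq_C_mul_self [IsAlgClosed k] {R : k[X]} (hR : R.Monic)
    (hsimple : ∀ z, R.rootMultiplicity z ≤ 1) {a b : k} (ha : a ≠ 0)
    (hroot : ∀ z, R.IsRoot z → R.IsRoot (a * z + b)) :
    R.comp (C a * X + C b) = C (a ^ R.natDegree) * R := by
  classical
  have hlc : (R.comp (C a * X + C b)).leadingCoeff = a ^ R.natDegree := by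
    rw [leadingCoeff_comp_affine ha, hR.leadingCoeff, one_mul]
  have hcomp : R.comp (C a * X + C b) ≠ 0 :=
    leadingCoeff_ne_zero.1 (hlc ▸ pow_ne_zero _ ha)
  have hnodup : R.roots.Nodup :=
    Multiset.nodup_iff_count_le_one.2 fun z => (count_roots R).trans_le (hsimple z)
  have hdvd : R ∣ R.comp (C a * X + C b) := by
    refine (IsAlgClosed.splits R).dvd_of_roots_le_roots hR.ne_zero <|
      (Multiset.le_iff_subset hnodup).2 fun z hz => ?_
    rw [mem_roots hcomp, IsRoot, eval_comp]
    simpa using hroot z ((mem_roots hR.ne_zero).1 hz)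
  rw [← hlc]
  exact eq_leadingCoeff_mul_of_monic_of_dvd_of_natDegree_le hR hdvd
    (by rw [natDegree_comp, natDegree_linear ha, mul_one])

theorem pow_eq_one_of_comp_affine_of_not_isRoot {R : k[X]} {a b : k} {n : ℕ}
    (hR : R.comp (C a * X + C b) = C (a ^ n) * R) (ha1 : a ≠ 1)
    (hc : ¬R.IsRoot (b / (1 - a))) : a ^ n = 1 := by
  have h := congrArg (eval (b / (1 - a))) hR
  rw [eval_comp, eval_mul, eval_C] at h
  simp only [eval_add, eval_mul, eval_C, eval_X, affine_fixedPoint ha1] at h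
  exact (mul_eq_right₀ hc).1 h.symm

theorem pow_eq_self_of_comp_affine_of_isRoot {R : k[X]} (hR0 : R ≠ 0) {a b : k} {n : ℕ}
    (hR : R.comp (C a * X + C b) = C (a ^ n) * R) (ha1 : a ≠ 1)
    (hc : R.IsRoot (b / (1 - a))) (hsimple : R.rootMultiplicity (b / (1 - a)) ≤ 1) :
    a ^ n = a := by
  have hder : (derivative R).eval (b / (1 - a)) ≠ 0 := fun h0 =>
    absurd ((one_lt_rootMultiplicity_iff_isRoot hR0).2 ⟨hc, h0⟩) (not_lt.2 hsimple)
  have h := congrArg (fun p => (derivative p).eval (b / (1 - a))) hR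
  simp only [derivative_comp, derivative_mul, derivative_C, derivative_X, derivative_add,
    eval_add, eval_mul, eval_C, eval_X, eval_comp, eval_zero, eval_one,
    affine_fixedPoint ha1] at h
  exact mul_right_cancel₀ hder (by simpa using h.symm)

theorem pow_natDegree_eq_one_of_comp_affine_eq_add_C {R : k[X]} {a b K : k}
    (ha : a ≠ 0) (h : R.comp (C a * X + C b) = R + C K) : a ^ R.natDegree = 1 := by
  rcases Nat.eq_zero_or_pos R.natDegree with h0 | hpos
  · rw [h0, pow_zero]
  have hlc : (R + C K).leadingCoeff = R.leadingCoeff :=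
    leadingCoeff_add_of_degree_lt' ((degree_C_le).trans_lt (natDegree_pos_iff_degree_pos.1 hpos))
  have hR0 : R.leadingCoeff ≠ 0 := leadingCoeff_ne_zero.2 (ne_zero_of_natDegree_gt hpos)
  rw [← h, leadingCoeff_comp_affine ha] at hlc
  exact (mul_eq_left₀ hR0).1 hlc

end Field

section CharZero

variable {k : Type*} [Field k] [CharZero k]

theorem eq_zero_of_isRoot_add_of_isRoot {R : k[X]} (hR0 : R ≠ 0) {b z : k}
    (hadd : ∀ w, R.IsRoot w → R.IsRoot (w + b)) (hz : R.IsRoot z) : b = 0 := by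
  by_contra hb
  have hroots : ∀ n : ℕ, R.IsRoot (z + n * b) := by
    intro n
    induction n with
    | zero => simpa using hz
    | succ n ih => simpa [add_mul, add_assoc] using hadd _ ih
  have hinj : Function.Injective fun n : ℕ => z + n * b := fun m n hmn => by
    simpa [hb] using hmn
  exact (finite_setOfPred_isRoot hR0).not_infinite
    (Set.infinite_of_injective_forall_mem hinj hroots)

theorem eq_zero_of_eval_add_eq {R : k[X]} (hR : 0 < R.natDegree) {b : k}
    (h : ∀ w, R.eval (w + b) = R.eval w) : b = 0 := by
  have hR0 : R - C (R.eval 0) ≠ 0 := fun h0 => by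
    rw [sub_eq_zero.1 h0, natDegree_C] at hR
    exact hR.ne rfl
  exact eq_zero_of_isRoot_add_of_isRoot hR0 (fun w hw => by simpa [IsRoot, h] using hw)
    (z := 0) (by simp)

end CharZero

theorem degree_le_zero_of_forall_exp_eval_eq {D : ℂ[X]} {c : ℂ}
    (h : ∀ w, Complex.exp (D.eval w) = c) : D.degree ≤ 0 := by
  by_contra! hpos
  have hc : c ≠ 0 := h 0 ▸ Complex.exp_ne_zero _
  -- `D` is onto, so it attains a value whose exponential is `-c`
  obtain ⟨w, hw⟩ := Complex.exists_root (f := D - C (Complex.log c + Real.pi * Complex.I))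
    (by rwa [degree_sub_C hpos])
  have hw : D.eval w = Complex.log c + Real.pi * Complex.I := by
    simpa [sub_eq_zero] using hw
  have := h w
  rw [hw, Complex.exp_add, Complex.exp_log hc, Complex.exp_pi_mul_I] at this
  exact hc (by linear_combination -this / 2)

theorem eq_zero_of_forall_eval_mul_eq_zero {R : ℂ[X]} (hR0 : R ≠ 0) {f : ℂ → ℂ}
    (hf : Continuous f) (h : ∀ w, R.eval w * f w = 0) : f = 0 := by
  have hdense : Dense {w | R.IsRoot w}ᶜ :=
    (finite_setOfPred_isRoot hR0).countable.dense_compl ℂ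
  exact hf.ext_on hdense continuous_const fun w hw => (mul_eq_zero.1 (h w)).resolve_left hw

end Polynomial

/-- The polynomial form to which `LeavesInv Q P E a b` reduces when all zeros and poles are
simple. -/
structure IsAffineSymmetry (Q P E : ℂ[X]) (a b : ℂ) : Prop where
  comp_Q : Q.comp (C a * X + C b) = C (a ^ Q.natDegree) * Q
  comp_P : P.comp (C a * X + C b) = C (a ^ P.natDegree) * P
  comp_E : ∃ K, E.comp (C a * X + C b) = E + C K ∧
    Complex.exp K * a ^ Q.natDegree = a ^ (P.natDegree + 1)

section LeavesInv

variable {Q P E : ℂ[X]} {a b : ℂ}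

theorem LeavesInv.isRoot_Q (h : LeavesInv Q P E a b) (hcop : ∀ z, ¬(Q.IsRoot z ∧ P.IsRoot z))
    {z : ℂ} (hz : Q.IsRoot z) : Q.IsRoot (a * z + b) := by
  have hPz : P.eval z ≠ 0 := fun h0 => hcop z ⟨hz, h0⟩
  have := h z
  rw [hz.eq_zero, mul_zero, zero_mul, zero_mul] at this
  simpa [hPz, Complex.exp_ne_zero] using this

theorem LeavesInv.isRoot_P (h : LeavesInv Q P E a b) (hcop : ∀ z, ¬(Q.IsRoot z ∧ P.IsRoot z))
    (ha : a ≠ 0) {z : ℂ} (hz : P.IsRoot z) : P.IsRoot (a * z + b) := by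
  have hQz : Q.eval z ≠ 0 := fun h0 => hcop z ⟨h0, hz⟩
  have := h z
  rw [hz.eq_zero, mul_zero, zero_mul, eq_comm] at this
  simpa [ha, hQz, Complex.exp_ne_zero] using this

theorem LeavesInv.isAffineSymmetry (h : LeavesInv Q P E a b) (hQ : Q.Monic) (hP : P.Monic)
    (hcop : ∀ z, ¬(Q.IsRoot z ∧ P.IsRoot z)) (hQsimple : ∀ z, Q.rootMultiplicity z ≤ 1)
    (hPsimple : ∀ z, P.rootMultiplicity z ≤ 1) (ha : a ≠ 0) : IsAffineSymmetry Q P E a b := by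
  have hQT := comp_affine_eq_C_mul_self hQ hQsimple ha fun _ => h.isRoot_Q hcop
  have hPT := comp_affine_eq_C_mul_self hP hPsimple ha fun _ => h.isRoot_P hcop ha
  refine ⟨hQT, hPT, ?_⟩
  have hexp : ∀ w, a ^ Q.natDegree * Complex.exp (E.eval (a * w + b)) =
      a ^ (P.natDegree + 1) * Complex.exp (E.eval w) := by
    refine congrFun (sub_eq_zero.1 (eq_zero_of_forall_eval_mul_eq_zero
      (mul_ne_zero hQ.ne_zero hP.ne_zero) (by fun_prop) fun w => ?_))
    have hQw := congrArg (eval w) hQT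
    have hPw := congrArg (eval w) hPT
    simp only [eval_comp, eval_add, eval_mul, eval_C, eval_X] at hQw hPw
    have := h w
    rw [hQw, hPw] at this
    simp only [Pi.sub_apply, eval_mul]
    linear_combination this
  set D := E.comp (C a * X + C b) - E
  have hD : ∀ w, Complex.exp (D.eval w) = a ^ (P.natDegree + 1) / a ^ Q.natDegree := by
    intro w
    simp only [D, eval_sub, eval_comp, eval_add, eval_mul, eval_C, eval_X, Complex.exp_sub]
    rw [div_eq_div_iff (Complex.exp_ne_zero _) (pow_ne_zero _ ha)]
    linear_combination hexp w
  refine ⟨D.coeff 0, sub_eq_iff_eq_add'.1 (eq_C_of_degree_le_zero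
    (degree_le_zero_of_forall_exp_eval_eq hD)), ?_⟩
  rw [coeff_zero_eq_eval_zero, hD 0, div_mul_cancel₀ _ (pow_ne_zero _ ha)]

end LeavesInv

namespace IsAffineSymmetry

variable {Q P E : ℂ[X]} {a b : ℂ}

theorem comp {a' b' : ℂ} (h : IsAffineSymmetry Q P E a b) (h' : IsAffineSymmetry Q P E a' b') :
    IsAffineSymmetry Q P E (a * a') (a * b' + b) := by
  have hT : C (a * a') * X + C (a * b' + b) = (C a * X + C b).comp (C a' * X + C b') := by
    simp only [add_comp, mul_comp, C_comp, X_comp, C_mul, C_add]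
    ring
  obtain ⟨K, hK, hexpK⟩ := h.comp_E
  obtain ⟨K', hK', hexpK'⟩ := h'.comp_E
  refine ⟨?_, ?_, K + K', ?_, ?_⟩
  · rw [hT, ← comp_assoc, h.comp_Q, mul_comp, C_comp, h'.comp_Q, mul_pow, C_mul, mul_assoc]
  · rw [hT, ← comp_assoc, h.comp_P, mul_comp, C_comp, h'.comp_P, mul_pow, C_mul, mul_assoc]
  · rw [hT, ← comp_assoc, hK, add_comp, C_comp, hK', C_add, add_assoc, add_comm (C K')]
  · rw [Complex.exp_add, mul_pow, mul_pow]
    linear_combination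
      (Complex.exp K' * a' ^ Q.natDegree) * hexpK + a ^ (P.natDegree + 1) * hexpK'

theorem translation_eq_zero (h : IsAffineSymmetry Q P E 1 b) (hP0 : P ≠ 0) {z : ℂ}
    (hz : P.IsRoot z) : b = 0 :=
  eq_zero_of_isRoot_add_of_isRoot hP0 (fun w hw => by
    simpa [IsRoot, hw.eq_zero, add_comm] using congrArg (eval w) h.comp_P) hz

theorem comp_E_eq_self (h : IsAffineSymmetry Q P E a b) (ha1 : a ≠ 1) :
    E.comp (C a * X + C b) = E ∧ a ^ Q.natDegree = a ^ (P.natDegree + 1) := by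
  obtain ⟨K, hK, hexpK⟩ := h.comp_E
  have hK0 : K = 0 := by
    simpa [eval_comp, affine_fixedPoint ha1] using congrArg (eval (b / (1 - a))) hK
  rw [hK0, C_0, add_zero] at hK
  rw [hK0, Complex.exp_zero, one_mul] at hexpK
  exact ⟨hK, hexpK⟩

theorem pow_natDegree_E_eq_one (h : IsAffineSymmetry Q P E a b) (ha : a ≠ 0) :
    a ^ E.natDegree = 1 :=
  let ⟨_, hK, _⟩ := h.comp_E
  pow_natDegree_eq_one_of_comp_affine_eq_add_C ha hK

theorem eq_neg_one_of_isRoot (h : IsAffineSymmetry Q P E a b) (ha1 : a ≠ 1) (hP0 : P ≠ 0)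
    (hcop : ∀ z, ¬(Q.IsRoot z ∧ P.IsRoot z)) (hPsimple : ∀ z, P.rootMultiplicity z ≤ 1)
    (hc : P.IsRoot (b / (1 - a))) : a = -1 ∧ Even Q.natDegree ∧ Odd P.natDegree := by
  have hQ1 : a ^ Q.natDegree = 1 :=
    pow_eq_one_of_comp_affine_of_not_isRoot h.comp_Q ha1 fun hQc => hcop _ ⟨hQc, hc⟩
  have hPa : a ^ P.natDegree = a :=
    pow_eq_self_of_comp_affine_of_isRoot hP0 h.comp_P ha1 hc (hPsimple _)
  have hsq : a * a = 1 := by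
    have := (h.comp_E_eq_self ha1).2
    rwa [hQ1, pow_succ, hPa, eq_comm] at this
  obtain rfl := (mul_self_eq_one_iff.1 hsq).resolve_left ha1
  exact ⟨rfl, (neg_one_pow_eq_one_iff_even (by norm_num)).1 hQ1,
    (neg_one_pow_eq_neg_one_iff_odd (by norm_num)).1 hPa⟩

theorem eq_of_neg_one {b' : ℂ} (h : IsAffineSymmetry Q P E (-1) b)
    (h' : IsAffineSymmetry Q P E (-1) b') (hE : 0 < E.natDegree) : b' = b := by
  have hT := (h.comp_E_eq_self (by norm_num)).1
  have hT' := (h'.comp_E_eq_self (by norm_num)).1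
  refine sub_eq_zero.1 (eq_zero_of_eval_add_eq hE fun w => ?_)
  have h1 := congrArg (eval (b - w)) hT'
  have h2 := congrArg (eval w) hT
  simp only [eval_comp, eval_add, eval_mul, eval_C, eval_X] at h1 h2
  calc E.eval (w + (b' - b)) = E.eval (-1 * (b - w) + b') := by ring_nf
    _ = E.eval (-1 * w + b) := h1.trans (by ring_nf)
    _ = E.eval w := h2

theorem isRoot_fixedPoint {a' b' : ℂ} (h : IsAffineSymmetry Q P E (-1) b)
    (h' : IsAffineSymmetry Q P E a' b') (ha'1 : a' ≠ 1) (hr : Odd P.natDegree) (hP0 : P ≠ 0)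
    (hcop : ∀ z, ¬(Q.IsRoot z ∧ P.IsRoot z)) (hPsimple : ∀ z, P.rootMultiplicity z ≤ 1) :
    P.IsRoot (b' / (1 - a')) := by
  by_contra hc'
  have hr' : a' ^ P.natDegree = 1 := pow_eq_one_of_comp_affine_of_not_isRoot h'.comp_P ha'1 hc'
  -- `T' ∘ T` has multiplier `-a'` with `(-a')^r = -1`: its fixed point can be neither a pole
  -- (that would force `-a' = -1`) nor a regular point (that would force `(-a')^r = 1`).
  have hTT : (a' * -1) ^ P.natDegree = -1 := by rw [mul_pow, hr', hr.neg_one_pow, one_mul]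
  have hTT1 : a' * -1 ≠ 1 := fun h1 => by norm_num [h1] at hTT
  by_cases hc : P.IsRoot ((a' * b + b') / (1 - a' * -1))
  · have := ((h'.comp h).eq_neg_one_of_isRoot hTT1 hP0 hcop hPsimple hc).1
    exact ha'1 (by linear_combination -this)
  · have := pow_eq_one_of_comp_affine_of_not_isRoot (h'.comp h).comp_P hTT1 hc
    rw [hTT] at this
    norm_num at this

end IsAffineSymmetry

/-- if all zeros and poles of `X ∈ E(s,r,d)` are simple, a
nontrivial affine map `T(w) = a·w + b` leaves `X` invariant, and the fixed
point `C = b/(1−a)` of `T` is a root of `P`, then `a = −1` (so `T` is the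
rotation of order 2 about `C`), `r` is odd, `s` is even, `d` is even, and the
isotropy group of `X` is exactly `{id, T}`. -/
theorem stmt9 (s r d : ℕ) (hd : 1 ≤ d)
    (lam : ℂ) (Q P E : Polynomial ℂ) (hX : EData s r d lam Q P E)
    (hQsimple : ∀ z : ℂ, Q.rootMultiplicity z ≤ 1)
    (hPsimple : ∀ z : ℂ, P.rootMultiplicity z ≤ 1)
    (a b : ℂ) (ha : a ≠ 0) (hnt : (a, b) ≠ (1, 0))
    (hinv : LeavesInv Q P E a b)
    (hC : P.IsRoot (b / (1 - a))) :
    a = -1 ∧ Odd r ∧ Even s ∧ Even d ∧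
      ∀ a' b' : ℂ, a' ≠ 0 → LeavesInv Q P E a' b' →
        (a' = 1 ∧ b' = 0) ∨ (a' = a ∧ b' = b) := by
  obtain ⟨-, hQ, hP, rfl, rfl, rfl, hcop⟩ := hX
  have hsym := hinv.isAffineSymmetry hQ hP hcop hQsimple hPsimple ha
  have ha1 : a ≠ 1 := by
    rintro rfl
    exact hnt (by rw [hsym.translation_eq_zero hP.ne_zero hC])
  obtain ⟨rfl, hs, hr⟩ := hsym.eq_neg_one_of_isRoot ha1 hP.ne_zero hcop hPsimple hC
  refine ⟨rfl, hr, hs, (neg_one_pow_eq_one_iff_even (by norm_num)).1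
    (hsym.pow_natDegree_E_eq_one (by norm_num)), fun a' b' ha' hinv' => ?_⟩
  have hsym' := hinv'.isAffineSymmetry hQ hP hcop hQsimple hPsimple ha'
  by_cases ha'1 : a' = 1
  · subst ha'1
    exact .inl ⟨rfl, hsym'.translation_eq_zero hP.ne_zero hC⟩
  · have hC' := hsym.isRoot_fixedPoint hsym' ha'1 hr hP.ne_zero hcop hPsimple
    obtain ⟨rfl, -, -⟩ := hsym'.eq_neg_one_of_isRoot ha'1 hP.ne_zero hcop hPsimple hC'
    exact .inr ⟨rfl, hsym.eq_of_neg_one hsym' hd⟩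
end
end

section
/- Let k ≥ 2 and let s = k·k_s + 1, r = k·k_r, d = k·k_d with integers k_s, k_r ≥ 0 and k_d ≥ 1. Then there exists X ∈ E(s,r,d) all of whose zeros and poles are simple (all roots of Q and of P have multiplicity 1) and which is left invariant by the rotation of order k about some point C ∈ ℂ, where C is a (simple) zero of X; in particular the isotropy group of X contains a cyclic group of order k. -/
open Polynomial

noncomputable section

/-! Rotate about `0` by a primitive `k`-th root of unity `a`. Polynomials in `X ^ k` are invariant
under `w ↦ a * w`, and `X` times such a polynomial is multiplied by `a`. So
`Q = X * ∏_{b ∈ S} (X ^ k - b)`, `P = ∏_{b ∈ T} (X ^ k - b)` and `E = X ^ (k * kd)` are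
invariant; taking disjoint sets `S`, `T` of nonzero numbers of sizes `ks`, `kr` makes all roots of
`Q` and `P` simple and keeps them apart. -/

namespace Polynomial

section prodXPowSubC

variable {K : Type*} [Field K] {k : ℕ} {s t : Finset K}

def prodXPowSubC (k : ℕ) (s : Finset K) : K[X] :=
  ∏ b ∈ s, (X ^ k - C b)

theorem monic_prodXPowSubC (hk : k ≠ 0) : (prodXPowSubC k s).Monic :=
  monic_prod_of_monic _ _ fun b _ => monic_X_pow_sub_C b hk

theorem natDegree_prodXPowSubC (hk : k ≠ 0) : (prodXPowSubC k s).natDegree = k * s.card := by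
  rw [prodXPowSubC, natDegree_prod_of_monic _ _ fun b _ => monic_X_pow_sub_C b hk]
  simp only [natDegree_X_pow_sub_C, Finset.sum_const, smul_eq_mul, mul_comm]

theorem isRoot_prodXPowSubC {z : K} : (prodXPowSubC k s).IsRoot z ↔ z ^ k ∈ s := by
  simp [prodXPowSubC, IsRoot, eval_prod, Finset.prod_eq_zero_iff, sub_eq_zero]

theorem eval_mul_prodXPowSubC {a : K} (ha : a ^ k = 1) (z : K) :
    (prodXPowSubC k s).eval (a * z) = (prodXPowSubC k s).eval z := by
  simp [prodXPowSubC, eval_prod, mul_pow, ha]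

/-- `expand` carries the coprime factors `X - C b` to the factors `X ^ k - C b`. -/
theorem separable_prodXPowSubC (hk : (k : K) ≠ 0) (hs : 0 ∉ s) :
    (prodXPowSubC k s).Separable := by
  refine separable_prod' (fun b _ c _ hbc => ?_) fun b hb =>
    separable_X_pow_sub_C b hk (ne_of_mem_of_not_mem hb hs)
  simpa using (isCoprime_X_sub_C_of_isUnit_sub (sub_ne_zero.mpr hbc).isUnit).map
    (expand K k).toRingHom

theorem separable_X_mul_prodXPowSubC (hk : (k : K) ≠ 0) (hs : 0 ∉ s) :
    (X * prodXPowSubC k s).Separable := by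
  refine separable_X.mul (separable_prodXPowSubC hk hs) ?_
  rw [irreducible_X.coprime_iff_not_dvd, X_dvd_iff, coeff_zero_eq_eval_zero]
  have hk0 : k ≠ 0 := by rintro rfl; simp at hk
  have h0 : ¬ (prodXPowSubC k s).IsRoot 0 := by rwa [isRoot_prodXPowSubC, zero_pow hk0]
  exact h0

theorem not_isRoot_X_mul_prodXPowSubC_and (hk : k ≠ 0) (hst : Disjoint s t) (ht : 0 ∉ t)
    (z : K) : ¬ ((X * prodXPowSubC k s).IsRoot z ∧ (prodXPowSubC k t).IsRoot z) := by
  rintro ⟨hzs, hzt⟩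
  rw [IsRoot, eval_mul, eval_X, mul_eq_zero, ← IsRoot, isRoot_prodXPowSubC] at hzs
  rw [isRoot_prodXPowSubC] at hzt
  rcases hzs with rfl | hzs
  · exact ht (by simpa [zero_pow hk] using hzt)
  · exact Finset.disjoint_left.mp hst hzs hzt

end prodXPowSubC

end Polynomial

theorem exists_disjoint_finsets_not_mem_zero (K : Type*) [AddMonoidWithOne K] [CharZero K]
    (m n : ℕ) : ∃ S T : Finset K, S.card = m ∧ T.card = n ∧ Disjoint S T ∧ 0 ∉ S ∧ 0 ∉ T := by
  refine ⟨(Finset.Icc 1 m).map Nat.castEmbedding, (Finset.Ioc m (m + n)).map Nat.castEmbedding,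
    by simp, by simp, ?_, by simp, by simp⟩
  rw [Finset.disjoint_map, Finset.disjoint_left]
  simp only [Finset.mem_Icc, Finset.mem_Ioc]
  omega

theorem leavesInv_zero_of_eval_mul {Q P E : ℂ[X]} {a : ℂ}
    (hQ : ∀ w, Q.eval (a * w) = a * Q.eval w) (hP : ∀ w, P.eval (a * w) = P.eval w)
    (hE : ∀ w, E.eval (a * w) = E.eval w) : LeavesInv Q P E a 0 := by
  intro w
  rw [add_zero, hQ, hP, hE]

theorem stmt10_general (k ks kr kd : ℕ) (hk : 2 ≤ k)
    (s r d : ℕ) (hs : s = k * ks + 1) (hr : r = k * kr) (hd : d = k * kd) :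
    ∃ (lam : ℂ) (Q P E : Polynomial ℂ) (c a : ℂ),
      EData s r d lam Q P E ∧
      (∀ z : ℂ, Q.rootMultiplicity z ≤ 1) ∧
      (∀ z : ℂ, P.rootMultiplicity z ≤ 1) ∧
      IsPrimitiveRoot a k ∧
      LeavesInv Q P E a (c - a * c) ∧
      Q.IsRoot c ∧ Q.rootMultiplicity c = 1 := by
  subst hs hr hd
  have hk0 : k ≠ 0 := by omega
  have hkC : (k : ℂ) ≠ 0 := Nat.cast_ne_zero.mpr hk0
  obtain ⟨a, ha⟩ : ∃ a : ℂ, IsPrimitiveRoot a k := ⟨_, Complex.isPrimitiveRoot_exp k hk0⟩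
  obtain ⟨sQ, sP, hQcard, hPcard, hdisj, hsQ, hsP⟩ := exists_disjoint_finsets_not_mem_zero ℂ ks kr
  set Q := X * prodXPowSubC k sQ
  have hQsep : Q.Separable := separable_X_mul_prodXPowSubC hkC hsQ
  have hQ0 : Q.IsRoot 0 := by simp [Q]
  refine ⟨1, Q, prodXPowSubC k sP, X ^ (k * kd), 0, a,
    ⟨one_ne_zero, monic_X.mul (monic_prodXPowSubC hk0), monic_prodXPowSubC hk0, ?_, ?_,
      natDegree_X_pow _, not_isRoot_X_mul_prodXPowSubC_and hk0 hdisj hsP⟩,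
    rootMultiplicity_le_one_of_separable hQsep,
    rootMultiplicity_le_one_of_separable (separable_prodXPowSubC hkC hsP), ha, ?_, hQ0,
    le_antisymm (rootMultiplicity_le_one_of_separable hQsep 0)
      ((rootMultiplicity_pos hQsep.ne_zero).mpr hQ0)⟩
  · rw [monic_X.natDegree_mul (monic_prodXPowSubC hk0), natDegree_prodXPowSubC hk0,
      hQcard, natDegree_X, add_comm]
  · rw [natDegree_prodXPowSubC hk0, hPcard]
  · rw [mul_zero, sub_zero]
    refine leavesInv_zero_of_eval_mul (fun w => ?_) (eval_mul_prodXPowSubC ha.pow_eq_one)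
      fun w => by simp [mul_pow, pow_mul, ha.pow_eq_one]
    simp only [Q, eval_mul, eval_X, eval_mul_prodXPowSubC ha.pow_eq_one, mul_assoc]

/-- for `k ≥ 2`, `s = k·k_s + 1`, `r = k·k_r`, `d = k·k_d` with
`k_d ≥ 1`, there exists `X ∈ E(s,r,d)` with all zeros and poles simple which
is left invariant by the rotation of order `k` about some point `C`, `C` being
a simple zero of `X`. -/
theorem stmt10 (k ks kr kd : ℕ) (hk : 2 ≤ k) (hkd : 1 ≤ kd)
    (s r d : ℕ) (hs : s = k * ks + 1) (hr : r = k * kr) (hd : d = k * kd) :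
    ∃ (lam : ℂ) (Q P E : Polynomial ℂ) (c a : ℂ),
      EData s r d lam Q P E ∧
      (∀ z : ℂ, Q.rootMultiplicity z ≤ 1) ∧
      (∀ z : ℂ, P.rootMultiplicity z ≤ 1) ∧
      IsPrimitiveRoot a k ∧
      LeavesInv Q P E a (c - a * c) ∧
      Q.IsRoot c ∧ Q.rootMultiplicity c = 1 :=
  stmt10_general k ks kr kd hk s r d hs hr hd
end
end

section
/- Let s, r ≥ 0 and d ≥ 1 be integers, let X ∈ E(s,r,d) have data (λ, Q, P, E), and suppose a rotation of order k ≥ 2 about C ∈ ℂ leaves X invariant. Then the barycenters of the three root configurations all equal C: the sum of the roots of Q counted with multiplicity equals s·C, the sum of the roots of P counted with multiplicity equals r·C, and the sum of the roots of E counted with multiplicity equals d·C. -/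
open Polynomial

noncomputable section

/-!
Let `T w = a (w - c) + c`. Dividing the invariance identity by `exp (E w)` gives
`A · exp (E ∘ T - E) = B` for the polynomials `A = (Q ∘ T) P` and `B = a Q (P ∘ T)`.
Differentiating, the Wronskian `A B' - A' B` equals `A B (E ∘ T - E)'`, which is impossible
by degrees unless `E ∘ T - E` is constant; it vanishes at the fixed point `c`, so `E ∘ T = E`
and `A = B`. Since `Q` and `P` are coprime, `Q ∣ Q ∘ T` and `P ∣ P ∘ T`. So each of `Q`, `P`, `E`
is a constant multiple of its composite with `T`, its roots are permuted by `T⁻¹`, and the root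
sum `σ` of degree `n` satisfies `σ = a⁻¹ (σ - n c) + n c`; as `a ≠ 1`, `σ = n c`.
-/

namespace Polynomial

theorem sum_roots_eq_natDegree_mul_of_comp_eq {K : Type*} [Field K] [IsAlgClosed K]
    {F : K[X]} {a c u : K} (ha : a ≠ 0) (ha1 : a ≠ 1) (hu : u ≠ 0)
    (h : F.comp (C a * X + C (c - a * c)) = C u * F) :
    F.roots.sum = F.natDegree * c := by
  have hroots : F.roots.map (fun t => a⁻¹ * (t - (c - a * c))) = F.roots := by
    rw [← Ring.inverse_eq_inv', ← roots_comp_C_mul_X_add_C _ _ _ ha.isUnit, h,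
      roots_C_mul _ hu]
  have hsum := congrArg Multiset.sum hroots
  simp only [Multiset.sum_map_mul_left, Multiset.sum_map_sub, Multiset.map_const',
    Multiset.sum_replicate, Multiset.map_id', IsAlgClosed.card_roots_eq_natDegree,
    nsmul_eq_mul] at hsum
  field_simp at hsum
  apply mul_left_cancel₀ (sub_ne_zero.mpr ha1)
  linear_combination -hsum

theorem derivative_eq_zero_of_eval_mul_cexp_eq {A B H : ℂ[X]} (hA : A ≠ 0) (hB : B ≠ 0)
    (h : ∀ w, A.eval w * Complex.exp (H.eval w) = B.eval w) : derivative H = 0 := by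
  have hwronskian : wronskian A B = A * B * derivative H := by
    refine Polynomial.funext fun w => ?_
    have hderiv := ((A.hasDerivAt w).mul (H.hasDerivAt w).cexp).congr_of_eventuallyEq
      (Filter.Eventually.of_forall fun x => (h x).symm)
    simp only [wronskian, eval_sub, eval_mul, (B.hasDerivAt w).unique hderiv, ← h w]
    ring
  by_contra hH
  have hlt := natDegree_wronskian_lt_add (hwronskian ▸ mul_ne_zero (mul_ne_zero hA hB) hH)
  rw [hwronskian, natDegree_mul (mul_ne_zero hA hB) hH, natDegree_mul hA hB] at hlt
  omega

theorem comp_eq_C_mul_of_dvd_comp {R : Type*} [CommSemiring R] [NoZeroDivisors R]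
    {F p : R[X]} (hF : F.Monic) (hp : p.natDegree = 1) (hdvd : F ∣ F.comp p) :
    F.comp p = C (p.leadingCoeff ^ F.natDegree) * F := by
  rw [eq_leadingCoeff_mul_of_monic_of_dvd_of_natDegree_le hF hdvd
      (by rw [natDegree_comp, hp, mul_one]),
    leadingCoeff_comp (by rw [hp]; exact one_ne_zero), hF.leadingCoeff, one_mul]

end Polynomial

theorem LeavesInv.comp_eq {Q P E : ℂ[X]} {a c : ℂ} (hQ : Q ≠ 0) (hP : P ≠ 0) (ha : a ≠ 0)
    (h : LeavesInv Q P E a (c - a * c)) :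
    E.comp (C a * X + C (c - a * c)) = E ∧
      Q.comp (C a * X + C (c - a * c)) * P = C a * Q * P.comp (C a * X + C (c - a * c)) := by
  set T := C a * X + C (c - a * c)
  have hT : ∀ w, T.eval w = a * w + (c - a * c) := fun w => by simp [T]
  have hcomp : ∀ F : ℂ[X], F ≠ 0 → F.comp T ≠ 0 := fun F hF => by
    rw [← leadingCoeff_ne_zero,
      leadingCoeff_comp (by rw [natDegree_linear ha]; exact one_ne_zero), leadingCoeff_linear ha]
    exact mul_ne_zero (leadingCoeff_ne_zero.mpr hF) (pow_ne_zero _ ha)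
  have hexp : ∀ w, (Q.comp T * P).eval w * Complex.exp ((E.comp T - E).eval w)
      = (C a * Q * P.comp T).eval w := fun w => by
    simp only [eval_mul, eval_sub, eval_comp, eval_C, hT, Complex.exp_sub]
    rw [mul_div_assoc', div_eq_iff (Complex.exp_ne_zero _), h w]
  have hH' := derivative_eq_zero_of_eval_mul_cexp_eq (mul_ne_zero (hcomp Q hQ) hP)
    (mul_ne_zero (mul_ne_zero (C_ne_zero.mpr ha) hQ) (hcomp P hP)) hexp
  have hH : E.comp T - E = 0 := by
    have hconst := eq_C_of_natDegree_eq_zero (derivative_eq_zero.mp hH')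
    have hc : (E.comp T - E).eval c = 0 := by simp [hT]
    rw [hconst, eval_C] at hc
    rw [hconst, hc, C_0]
  refine ⟨sub_eq_zero.mp hH, Polynomial.funext fun w => ?_⟩
  simpa [hH] using hexp w

theorem stmt11_general (s r d : ℕ)
    (lam : ℂ) (Q P E : Polynomial ℂ) (hX : EData s r d lam Q P E)
    (k : ℕ) (hk : 2 ≤ k) (a c : ℂ) (hprim : IsPrimitiveRoot a k)
    (hinv : LeavesInv Q P E a (c - a * c)) :
    Q.roots.sum = (s : ℂ) * c ∧
    P.roots.sum = (r : ℂ) * c ∧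
    E.roots.sum = (d : ℂ) * c := by
  obtain ⟨-, hQ, hP, rfl, rfl, rfl, hnoCommonRoot⟩ := hX
  have ha : a ≠ 0 := hprim.ne_zero (by omega)
  have ha1 : a ≠ 1 := hprim.ne_one (by omega)
  have hcop : IsCoprime Q P := (isCoprime_iff_aeval_ne_zero_of_isAlgClosed ℂ ℂ Q P).mpr
    fun z => by simpa only [coe_aeval_eq_eval, IsRoot.def, not_and_or] using hnoCommonRoot z
  obtain ⟨hE, hQP⟩ := hinv.comp_eq hQ.ne_zero hP.ne_zero ha
  set T := C a * X + C (c - a * c)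
  have hT : T.natDegree = 1 := natDegree_linear ha
  have hQdvd : Q ∣ Q.comp T :=
    hcop.dvd_of_dvd_mul_right ⟨C a * P.comp T, by rw [hQP]; ring⟩
  have hPdvd : P ∣ P.comp T := by
    refine (isUnit_C.mpr ha.isUnit).dvd_mul_left.mp (hcop.symm.dvd_of_dvd_mul_left ?_)
    exact ⟨Q.comp T, by rw [mul_comm P, hQP]; ring⟩
  have hu (n : ℕ) : T.leadingCoeff ^ n ≠ 0 := pow_ne_zero n (by rwa [leadingCoeff_linear ha])
  exact ⟨sum_roots_eq_natDegree_mul_of_comp_eq ha ha1 (hu _)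
      (comp_eq_C_mul_of_dvd_comp hQ hT hQdvd),
    sum_roots_eq_natDegree_mul_of_comp_eq ha ha1 (hu _) (comp_eq_C_mul_of_dvd_comp hP hT hPdvd),
    sum_roots_eq_natDegree_mul_of_comp_eq ha ha1 one_ne_zero (by rw [C_1, one_mul, hE])⟩

/-- if a rotation of order `k ≥ 2` about `C` leaves
`X ∈ E(s,r,d)` invariant, then the barycenters of the roots of `Q`, `P` and
`E` (counted with multiplicity) all equal `C`: the root sums are `s·C`, `r·C`
and `d·C` respectively. -/
theorem stmt11 (s r d : ℕ) (hd : 1 ≤ d)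
    (lam : ℂ) (Q P E : Polynomial ℂ) (hX : EData s r d lam Q P E)
    (k : ℕ) (hk : 2 ≤ k) (a c : ℂ) (hprim : IsPrimitiveRoot a k)
    (hinv : LeavesInv Q P E a (c - a * c)) :
    Q.roots.sum = (s : ℂ) * c ∧
    P.roots.sum = (r : ℂ) * c ∧
    E.roots.sum = (d : ℂ) * c :=
  stmt11_general s r d lam Q P E hX k hk a c hprim hinv
end
end

section
/- Let s, r ≥ 0 and d ≥ 1 be integers with s + r + d ≥ 2, and let X ∈ E(s,r,d) have data (λ, Q, P, E). If b ∈ ℂ is such that the translation T(w) = w + b leaves X invariant, i.e. Q(w+b)·P(w)·exp(E(w+b)) = Q(w)·P(w+b)·exp(E(w)) for all w ∈ ℂ, then b = 0. In other words, no nontrivial translation leaves an element of E(s,r,d) invariant. -/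
open Polynomial

noncomputable section

/-!
Put `A(w) = Q(w+b)P(w)`, `B(w) = Q(w)P(w+b)` and `D(w) = E(w+b) - E(w)`, so that invariance reads
`A·exp D = B`. Differentiating gives `A·B·D' = A·B' - A'·B`, whose right side (a Wronskian) has
degree below `deg A + deg B`; hence `D' = 0`, and comparing leading coefficients `A = B`.
As `Q` and `P` are coprime and monic, `Q` and `P` are then invariant under `w ↦ w + b`, and so is
`E'` since `D' = 0`. A polynomial with a nonzero period is constant, so `s = r = 0` and `d ≤ 1`.
-/

namespace Polynomial

section Shift

variable {R : Type*} [CommRing R] {p q : R[X]} {b : R}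

theorem comp_X_add_C_eq_self_of_isCoprime (hp : p.Monic) (hpq : IsCoprime p q)
    (h : p.comp (X + C b) * q = p * q.comp (X + C b)) : p.comp (X + C b) = p := by
  have hdvd : p ∣ p.comp (X + C b) := hpq.dvd_of_dvd_mul_right ⟨_, h⟩
  exact eq_of_monic_of_dvd_of_natDegree_le hp (hp.comp_X_add_C b) hdvd
    (by rw [← taylor_apply, natDegree_taylor])

variable [IsDomain R] [CharZero R]

theorem natDegree_eq_zero_of_comp_X_add_C_eq_self (hb : b ≠ 0)
    (h : p.comp (X + C b) = p) : p.natDegree = 0 := by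
  set p₀ := p - C (p.eval 0)
  have hroot : ∀ n : ℕ, p₀.IsRoot (n * b) := by
    intro n
    induction n with
    | zero => simp [p₀]
    | succ n ih =>
      have := congrArg (eval ((n : R) * b)) h
      simp only [eval_comp, eval_add, eval_X, eval_C] at this
      simpa [p₀, add_mul, this] using ih
  have hinj : Function.Injective fun n : ℕ => (n : R) * b :=
    fun m n hmn => Nat.cast_injective (mul_right_cancel₀ hb hmn)
  have hp₀ : p₀ = 0 :=
    eq_zero_of_infinite_isRoot _ (Set.infinite_of_injective_forall_mem hinj hroot)
  rw [sub_eq_zero.mp hp₀, natDegree_C]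

theorem natDegree_le_one_of_derivative_comp_X_add_C_sub_eq_zero (hb : b ≠ 0)
    (h : derivative (p.comp (X + C b) - p) = 0) : p.natDegree ≤ 1 := by
  have hperiodic : (derivative p).comp (X + C b) = derivative p := by
    simpa [derivative_comp, sub_eq_zero] using h
  have := natDegree_eq_zero_of_comp_X_add_C_eq_self hb hperiodic
  rw [natDegree_derivative] at this
  omega

end Shift

section ExpMul

variable {A B D : ℂ[X]}

theorem derivative_eq_zero_of_eval_mul_cexp_eq_s15 (hA : A ≠ 0)
    (h : ∀ z, A.eval z * Complex.exp (D.eval z) = B.eval z) : derivative D = 0 := by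
  have hB : B ≠ 0 := by
    rintro rfl
    exact hA (Polynomial.funext fun z => by simpa using h z)
  have hderiv : ∀ z, (A.derivative.eval z + A.eval z * D.derivative.eval z) *
      Complex.exp (D.eval z) = B.derivative.eval z := by
    intro z
    have hAD : HasDerivAt (fun z => A.eval z * Complex.exp (D.eval z)) _ z :=
      (A.hasDerivAt z).mul (D.hasDerivAt z).cexp
    simp only [h] at hAD
    rw [(B.hasDerivAt z).unique hAD]
    ring
  -- multiplying the differentiated identity by `A` and using `A·exp D = B` removes `exp D`
  have hwronskian : A * B * derivative D = wronskian A B := by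
    refine Polynomial.funext fun z => ?_
    simp only [wronskian, eval_mul, eval_sub, ← h z, ← hderiv z]
    ring
  by_contra hD
  have hlt := degree_wronskian_lt_add hA hB
  rw [← hwronskian, degree_mul, degree_mul, degree_eq_natDegree hA, degree_eq_natDegree hB,
    degree_eq_natDegree hD] at hlt
  norm_cast at hlt
  omega

theorem eq_of_monic_of_eval_mul_cexp_eq (hA : A.Monic) (hB : B.Monic) (hD : derivative D = 0)
    (h : ∀ z, A.eval z * Complex.exp (D.eval z) = B.eval z) : A = B := by
  have hAB : A * C (Complex.exp (D.coeff 0)) = B := Polynomial.funext fun z => by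
    have hz := h z
    rw [eq_C_of_derivative_eq_zero hD, eval_C] at hz
    simpa using hz
  have hexp : Complex.exp (D.coeff 0) = 1 := by
    simpa [hA.leadingCoeff, hB.leadingCoeff] using congrArg leadingCoeff hAB
  simpa [hexp] using hAB

end ExpMul

end Polynomial

theorem stmt15_general (s r d : ℕ) (h2 : 2 ≤ s + r + d)
    (lam : ℂ) (Q P E : Polynomial ℂ) (hX : EData s r d lam Q P E)
    (b : ℂ)
    (hinv : ∀ w : ℂ,
      Q.eval (w + b) * P.eval w * Complex.exp (E.eval (w + b)) =
        Q.eval w * P.eval (w + b) * Complex.exp (E.eval w)) :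
    b = 0 := by
  obtain ⟨-, hQ, hP, rfl, rfl, rfl, hroots⟩ := hX
  by_contra hb
  have hcop : IsCoprime Q P := by
    rw [isCoprime_iff_aeval_ne_zero_of_isAlgClosed ℂ ℂ]
    exact fun a => not_and_or.mp (hroots a)
  set D := E.comp (X + C b) - E
  have hfun : ∀ w, (Q.comp (X + C b) * P).eval w * Complex.exp (D.eval w) =
      (Q * P.comp (X + C b)).eval w := by
    intro w
    have := hinv w
    simp only [D, eval_mul, eval_sub, eval_comp, eval_add, eval_X, eval_C, Complex.exp_sub]
    field_simp
    linear_combination this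
  have hAm : (Q.comp (X + C b) * P).Monic := (hQ.comp_X_add_C b).mul hP
  have hD := derivative_eq_zero_of_eval_mul_cexp_eq_s15 hAm.ne_zero hfun
  have hAB := eq_of_monic_of_eval_mul_cexp_eq hAm (hQ.mul (hP.comp_X_add_C b)) hD hfun
  have hs := natDegree_eq_zero_of_comp_X_add_C_eq_self hb
    (comp_X_add_C_eq_self_of_isCoprime hQ hcop hAB)
  have hr := natDegree_eq_zero_of_comp_X_add_C_eq_self hb
    (comp_X_add_C_eq_self_of_isCoprime hP hcop.symm (by rw [mul_comm, ← hAB, mul_comm]))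
  have hd := natDegree_le_one_of_derivative_comp_X_add_C_sub_eq_zero hb hD
  omega

/-- no nontrivial translation `T(w) = w + b` leaves an element
of `E(s,r,d)` invariant. -/
theorem stmt15 (s r d : ℕ) (hd : 1 ≤ d) (h2 : 2 ≤ s + r + d)
    (lam : ℂ) (Q P E : Polynomial ℂ) (hX : EData s r d lam Q P E)
    (b : ℂ)
    (hinv : ∀ w : ℂ,
      Q.eval (w + b) * P.eval w * Complex.exp (E.eval (w + b)) =
        Q.eval w * P.eval (w + b) * Complex.exp (E.eval w)) :
    b = 0 :=
  stmt15_general s r d h2 lam Q P E hX b hinv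
end
end

section
/- Let s, r ≥ 0 and d ≥ 1 be integers, let k ≥ 2, let a be a primitive k-th root of unity, and suppose X ∈ E(s,r,d) with data (λ, Q, P, E) is left invariant by the rotation T(w) = a·w (of order k about C = 0), and that 0 is a root of P of multiplicity ν ≥ 1 (a pole of X). Then k | s, k | d, k | (ν + 1), and there exist λ' ∈ ℂ \ {0}, monic polynomials Q', P' ∈ ℂ[w] with no common roots, deg Q' = s/k and deg P' = (r+1)/k − 1, and a polynomial E' ∈ ℂ[w] with deg E' = d/k, such that k·z^{k−1}·λ·Q(z)·exp(E(z))·P'(z^k) = λ'·Q'(z^k)·exp(E'(z^k))·P(z) for all z ∈ ℂ; that is, the pushforward of X under z ↦ z^k is the element of E(s/k, (r+1)/k − 1, d/k) with data (λ', Q', P', E'). -/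
/-!
Invariance under `w ↦ a w` says that `exp (E(aw) - E(w))` is a rational function, which forces
`E(aX) = E`; what is left is the polynomial identity `Q(aX) · P = a · Q · P(aX)`. Coprimality of
`Q` and `P` and `Q(0) ≠ 0` then give `Q(aX) = Q` and `(X P)(aX) = X P`. A polynomial invariant
under `X ↦ a X`, with `a` a primitive `k`-th root of unity, only has monomials of degree divisible
by `k`, so `Q`, `E` and `X P = X^k P'(X^k)` are polynomials in `X^k`; these give the data of the
pushforward.
-/

open Polynomial

noncomputable section

namespace Polynomial

variable {R : Type*} [CommRing R] [IsDomain R] {k : ℕ} {a : R} {p Q P : R[X]}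

theorem dvd_of_coeff_ne_zero_of_comp_C_mul_X_eq (ha : IsPrimitiveRoot a k)
    (hp : p.comp (C a * X) = p) {n : ℕ} (hn : p.coeff n ≠ 0) : k ∣ n := by
  refine ha.dvd_of_pow_eq_one n (mul_left_cancel₀ hn ?_)
  simpa using congr_arg (coeff · n) hp

theorem exists_expand_eq_of_comp_C_mul_X_eq (ha : IsPrimitiveRoot a k) (hk : k ≠ 0)
    (hp : p.comp (C a * X) = p) : ∃ q, expand R k q = p := by
  refine ⟨contract k p, ext fun n => ?_⟩
  rw [coeff_expand hk.bot_lt, coeff_contract hk]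
  split_ifs with h
  · rw [Nat.div_mul_cancel h]
  · by_contra hn
    exact h (dvd_of_coeff_ne_zero_of_comp_C_mul_X_eq ha hp (Ne.symm hn))

theorem dvd_rootMultiplicity_zero_add_one_of_comp_C_mul_X_eq (ha : IsPrimitiveRoot a k)
    (hp : p ≠ 0) (h : (X * p).comp (C a * X) = X * p) : k ∣ p.rootMultiplicity 0 + 1 := by
  refine dvd_of_coeff_ne_zero_of_comp_C_mul_X_eq ha h ?_
  rw [coeff_X_mul, rootMultiplicity_eq_natTrailingDegree']
  exact trailingCoeff_nonzero_iff_nonzero.mpr hp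

theorem exists_X_pow_mul_expand_eq (hk : 0 < k) {S : R[X]} (h : expand R k S = X * p) :
    ∃ q, X ^ (k - 1) * expand R k q = p := by
  have hS0 : S.coeff 0 = 0 := by
    simpa [coeff_expand hk] using congr_arg (coeff · 0) h
  obtain ⟨q, rfl⟩ := X_dvd_iff.mpr hS0
  refine ⟨q, mul_left_cancel₀ X_ne_zero ?_⟩
  rw [← h, map_mul, expand_X, ← mul_assoc, ← pow_succ', Nat.sub_add_cancel hk]

/-- `Q ∣ Q(aX)` by coprimality, so `Q(aX) = c Q`, and comparing constant terms gives `c = 1`. -/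
theorem comp_C_mul_X_eq_self_of_comp_mul_eq (ha : a ≠ 0) (hQ : Q.Monic) (hQP : IsCoprime Q P)
    (hQ0 : Q.coeff 0 ≠ 0) (h : Q.comp (C a * X) * P = C a * Q * P.comp (C a * X)) :
    Q.comp (C a * X) = Q := by
  have hdvd : Q ∣ Q.comp (C a * X) :=
    hQP.dvd_of_dvd_mul_right ⟨C a * P.comp (C a * X), by rw [h]; ring⟩
  have hdeg : (Q.comp (C a * X)).natDegree ≤ Q.natDegree := by
    rw [natDegree_comp, natDegree_C_mul_X a ha, mul_one]
  have hc := eq_leadingCoeff_mul_of_monic_of_dvd_of_natDegree_le hQ hdvd hdeg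
  have hc0 : (Q.comp (C a * X)).leadingCoeff = 1 := by
    have := congr_arg (coeff · 0) hc
    simp only [comp_C_mul_X_coeff, pow_zero, mul_one, coeff_C_mul] at this
    exact (mul_eq_right₀ hQ0).mp this.symm
  rwa [hc0, C_1, one_mul] at hc

theorem X_mul_comp_C_mul_X_eq_self (hQ : Q ≠ 0) (hQa : Q.comp (C a * X) = Q)
    (h : Q.comp (C a * X) * P = C a * Q * P.comp (C a * X)) :
    (X * P).comp (C a * X) = X * P := by
  rw [hQa] at h
  have hP : P = C a * P.comp (C a * X) := mul_left_cancel₀ hQ (by linear_combination h)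
  conv_rhs => rw [hP]
  rw [mul_comp, X_comp]
  ring

theorem isCoprime_iff_forall_not_isRoot_and {K : Type*} [Field K] [IsAlgClosed K] {f g : K[X]} :
    IsCoprime f g ↔ ∀ z, ¬ (f.IsRoot z ∧ g.IsRoot z) := by
  rw [isCoprime_iff_aeval_ne_zero_of_isAlgClosed (k := K) K f g]
  simp only [coe_aeval_eq_eval, IsRoot.def, not_and_or]

/-- Differentiating gives `A · F' · B = W(A, B)`, and the Wronskian has degree
`< deg A + deg B`. -/
theorem derivative_eq_zero_of_eval_mul_exp_eq {A B F : ℂ[X]} (hA : A ≠ 0)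
    (h : ∀ w, A.eval w * Complex.exp (F.eval w) = B.eval w) : derivative F = 0 := by
  have hB : B ≠ 0 := fun hB => hA <| Polynomial.funext fun w => by
    simpa [Complex.exp_ne_zero, hB] using h w
  have hderiv : ∀ w, (derivative A + A * derivative F).eval w * Complex.exp (F.eval w) =
      (derivative B).eval w := fun w => by
    have hAF : HasDerivAt (fun z => A.eval z * Complex.exp (F.eval z)) _ w :=
      (A.hasDerivAt w).mul (F.hasDerivAt w).cexp
    rw [show (fun z => A.eval z * Complex.exp (F.eval z)) = fun z => B.eval z from _root_.funext h]
      at hAF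
    simp only [eval_add, eval_mul]
    linear_combination hAF.unique (B.hasDerivAt w)
  have hW : A * derivative F * B = wronskian A B := by
    refine Polynomial.funext fun w => ?_
    have hw := h w
    have hdw := hderiv w
    simp only [wronskian, eval_mul, eval_sub, eval_add] at hdw ⊢
    rw [← hw, ← hdw]
    ring
  by_contra hF
  have hlt := degree_wronskian_lt_add hA hB
  rw [← hW, degree_mul, degree_mul] at hlt
  have hF0 : (0 : WithBot ℕ) ≤ (derivative F).degree := zero_le_degree_iff.mpr hF
  have hle : A.degree + B.degree ≤ A.degree + (derivative F).degree + B.degree := by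
    gcongr
    exact le_add_of_nonneg_right hF0
  exact (lt_irrefl _) (hle.trans_lt hlt)

end Polynomial

namespace LeavesInv

variable {Q P E : ℂ[X]} {a : ℂ}

theorem eval_mul_exp_eq (h : LeavesInv Q P E a 0) (w : ℂ) :
    (Q.comp (C a * X) * P).eval w * Complex.exp ((E.comp (C a * X) - E).eval w) =
      (C a * Q * P.comp (C a * X)).eval w := by
  have hw := h w
  simp only [add_zero] at hw
  simp only [eval_mul, eval_sub, eval_comp, eval_C, eval_X, Complex.exp_sub]
  field_simp
  linear_combination hw

theorem comp_C_mul_X_exponent_eq (h : LeavesInv Q P E a 0) (ha : a ≠ 0) (hQ : Q ≠ 0)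
    (hP : P ≠ 0) : E.comp (C a * X) = E := by
  have hQa : Q.comp (C a * X) ≠ 0 :=
    (comp_C_mul_X_eq_zero_iff (mem_nonZeroDivisors_of_ne_zero ha)).not.mpr hQ
  have hF := derivative_eq_zero_of_eval_mul_exp_eq (mul_ne_zero hQa hP) h.eval_mul_exp_eq
  rw [← sub_eq_zero, eq_C_of_derivative_eq_zero hF]
  simp

theorem comp_mul_eq (h : LeavesInv Q P E a 0) (ha : a ≠ 0) (hQ : Q ≠ 0) (hP : P ≠ 0) :
    Q.comp (C a * X) * P = C a * Q * P.comp (C a * X) :=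
  Polynomial.funext fun w => by
    simpa [h.comp_C_mul_X_exponent_eq ha hQ hP] using h.eval_mul_exp_eq w

theorem comp_C_mul_X_eq_self (h : LeavesInv Q P E a 0) (ha : a ≠ 0) (hQ : Q.Monic) (hP : P ≠ 0)
    (hQP : IsCoprime Q P) (hP0 : P.IsRoot 0) :
    Q.comp (C a * X) = Q ∧ (X * P).comp (C a * X) = X * P ∧ E.comp (C a * X) = E := by
  have hQ0 : Q.coeff 0 ≠ 0 := by
    rw [coeff_zero_eq_eval_zero]
    exact fun hQ0 => isCoprime_iff_forall_not_isRoot_and.mp hQP 0 ⟨hQ0, hP0⟩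
  have hmul := h.comp_mul_eq ha hQ.ne_zero hP
  have hQa := comp_C_mul_X_eq_self_of_comp_mul_eq ha hQ hQP hQ0 hmul
  exact ⟨hQa, X_mul_comp_C_mul_X_eq_self hQ.ne_zero hQa hmul,
    h.comp_C_mul_X_exponent_eq ha hQ.ne_zero hP⟩

end LeavesInv

theorem stmt16_general (s r d : ℕ)
    (lam : ℂ) (Q P E : Polynomial ℂ) (hX : EData s r d lam Q P E)
    (k : ℕ) (hk : 2 ≤ k) (a : ℂ) (hprim : IsPrimitiveRoot a k)
    (hinv : LeavesInv Q P E a 0)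
    (hν : 1 ≤ P.rootMultiplicity 0) :
    k ∣ s ∧ k ∣ d ∧ k ∣ (P.rootMultiplicity 0 + 1) ∧
    ∃ (lam' : ℂ) (Q' P' E' : Polynomial ℂ),
      lam' ≠ 0 ∧ Q'.Monic ∧ P'.Monic ∧
      (∀ z : ℂ, ¬ (Q'.IsRoot z ∧ P'.IsRoot z)) ∧
      Q'.natDegree = s / k ∧ P'.natDegree = (r + 1) / k - 1 ∧
      E'.natDegree = d / k ∧
      ∀ z : ℂ,
        (k : ℂ) * z ^ (k - 1) * lam * Q.eval z * Complex.exp (E.eval z) *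
            P'.eval (z ^ k) =
          lam' * Q'.eval (z ^ k) * Complex.exp (E'.eval (z ^ k)) * P.eval z := by
  obtain ⟨hlam, hQm, hPm, rfl, rfl, rfl, hcop⟩ := hX
  have hk0 : 0 < k := by omega
  have hQP := isCoprime_iff_forall_not_isRoot_and.mpr hcop
  have hP0 : P.IsRoot 0 := (rootMultiplicity_pos hPm.ne_zero).mp hν
  obtain ⟨hQa, hXPa, hEa⟩ :=
    hinv.comp_C_mul_X_eq_self (hprim.ne_zero hk0.ne') hQm hPm.ne_zero hQP hP0
  have hkν := dvd_rootMultiplicity_zero_add_one_of_comp_C_mul_X_eq hprim hPm.ne_zero hXPa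
  obtain ⟨Q', rfl⟩ := exists_expand_eq_of_comp_C_mul_X_eq hprim hk0.ne' hQa
  obtain ⟨E', rfl⟩ := exists_expand_eq_of_comp_C_mul_X_eq hprim hk0.ne' hEa
  obtain ⟨S, hS⟩ := exists_expand_eq_of_comp_C_mul_X_eq hprim hk0.ne' hXPa
  obtain ⟨P', rfl⟩ := exists_X_pow_mul_expand_eq hk0 hS
  have hP'm : P'.Monic := (monic_expand_iff hk0).mp ((monic_X_pow _).of_mul_monic_left hPm)
  have hPd : (X ^ (k - 1) * expand ℂ k P').natDegree + 1 = (P'.natDegree + 1) * k := by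
    rw [(monic_X_pow _).natDegree_mul (hP'm.expand hk0), natDegree_X_pow, natDegree_expand,
      add_mul, one_mul]
    omega
  simp only [natDegree_expand, hPd, Nat.mul_div_cancel _ hk0, Nat.add_sub_cancel]
  refine ⟨dvd_mul_left _ _, dvd_mul_left _ _, hkν, k * lam, Q', P', E',
    mul_ne_zero (by exact_mod_cast hk0.ne') hlam, (monic_expand_iff hk0).mp hQm, hP'm,
    isCoprime_iff_forall_not_isRoot_and.mp ((isCoprime_expand hk0.ne').mp hQP.of_mul_right_right),
    rfl, rfl, rfl, fun z => ?_⟩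
  simp only [eval_mul, eval_pow, eval_X, expand_eval]
  ring

/-- if `X ∈ E(s,r,d)` is invariant under the rotation
`T(w) = a·w` of order `k ≥ 2` about `0`, and `0` is a pole of `X` of
multiplicity `ν ≥ 1`, then `k ∣ s`, `k ∣ d`, `k ∣ (ν+1)`, and the pushforward
of `X` under `z ↦ z^k` is an element of `E(s/k, (r+1)/k − 1, d/k)`. -/
theorem stmt16 (s r d : ℕ) (hd : 1 ≤ d)
    (lam : ℂ) (Q P E : Polynomial ℂ) (hX : EData s r d lam Q P E)
    (k : ℕ) (hk : 2 ≤ k) (a : ℂ) (hprim : IsPrimitiveRoot a k)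
    (hinv : LeavesInv Q P E a 0)
    (hν : 1 ≤ P.rootMultiplicity 0) :
    k ∣ s ∧ k ∣ d ∧ k ∣ (P.rootMultiplicity 0 + 1) ∧
    ∃ (lam' : ℂ) (Q' P' E' : Polynomial ℂ),
      lam' ≠ 0 ∧ Q'.Monic ∧ P'.Monic ∧
      (∀ z : ℂ, ¬ (Q'.IsRoot z ∧ P'.IsRoot z)) ∧
      Q'.natDegree = s / k ∧ P'.natDegree = (r + 1) / k - 1 ∧
      E'.natDegree = d / k ∧
      ∀ z : ℂ,
        (k : ℂ) * z ^ (k - 1) * lam * Q.eval z * Complex.exp (E.eval z) *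
            P'.eval (z ^ k) =
          lam' * Q'.eval (z ^ k) * Complex.exp (E'.eval (z ^ k)) * P.eval z :=
  stmt16_general s r d lam Q P E hX k hk a hprim hinv hν
end
end
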